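/- arXiv:1705.00588 — 7 statements merged into one kernel-verified Lean document; each statement's English description precedes it below -/
import Mathlib

section
/- For a lattice V the following are equivalent: (a) V is simply connected (contains no zigzag cycles); (b) the two endpoints of every zigzag of length at least 2 are incomparable; (c) for every zigzag x_0,…,x_m in V and every i ≤ m one has inf(x_0,x_m) ≤ x_i ≤ sup(x_0,x_m). -/
variable {V : Type*} [Lattice V]

/-- A *zigzag* of length `n`: consecutive terms are strictly comparable and every
interior term is either the infimum (a sink) or the supremum (a peak) of its two
neighbours. -/
def IsZigzag (x : ℕ → V) (n : ℕ) : Prop :=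
  (∀ i < n, x i < x (i + 1) ∨ x (i + 1) < x i) ∧
  ∀ i, i + 2 ≤ n →
    (x (i + 1) < x i ∧ x (i + 1) < x (i + 2) ∧ x (i + 1) = x i ⊓ x (i + 2)) ∨
    (x i < x (i + 1) ∧ x (i + 2) < x (i + 1) ∧ x (i + 1) = x i ⊔ x (i + 2))

/-- A *zigzag cycle* of length `2 * n`: a `2 * n`-periodic sequence satisfying the
zigzag condition at every index (i.e. indices modulo `2 * n`). -/
def IsZigzagCycle (x : ℕ → V) (n : ℕ) : Prop :=
  0 < n ∧ (∀ i, x (i + 2 * n) = x i) ∧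
  ∀ i,
    (x (i + 1) < x i ∧ x (i + 1) < x (i + 2) ∧ x (i + 1) = x i ⊓ x (i + 2)) ∨
    (x i < x (i + 1) ∧ x (i + 2) < x (i + 1) ∧ x (i + 1) = x i ⊔ x (i + 2))

/-- A lattice is *simply connected* if it contains no zigzag cycles. -/
def SimplyConnected (V : Type*) [Lattice V] : Prop :=
  ∀ (x : ℕ → V) (n : ℕ), ¬IsZigzagCycle x n

lemma zz_mono {x : ℕ → V} {n m : ℕ} (h : IsZigzag x n) (hm : m ≤ n) : IsZigzag x m :=
  ⟨fun i hi => h.1 i (lt_of_lt_of_le hi hm), fun i hi => h.2 i (le_trans hi hm)⟩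
lemma zz_shift {x : ℕ → V} {n : ℕ} (h : IsZigzag x (n + 1)) :
    IsZigzag (fun i => x (i + 1)) n := by
  constructor
  · intro i hi
    exact h.1 (i + 1) (by omega)
  · intro i hi
    have := h.2 (i + 1) (by omega)
    have e2 : i + 1 + 2 = i + 2 + 1 := by omega
    rw [e2] at this
    simpa using this
lemma zz_reverse {x : ℕ → V} {n : ℕ} (h : IsZigzag x n) :
    IsZigzag (fun i => x (n - i)) n := by
  constructor
  · intro i hi
    have h1 := h.1 (n - (i + 1)) (by omega)
    have e : n - (i + 1) + 1 = n - i := by omega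
    rw [e] at h1
    exact h1.symm
  · intro i hi
    have h2 := h.2 (n - (i + 2)) (by omega)
    have e1 : n - (i + 2) + 1 = n - (i + 1) := by omega
    have e2 : n - (i + 2) + 2 = n - i := by omega
    rw [e1, e2] at h2
    simp only []
    rcases h2 with ⟨a, b, c⟩ | ⟨a, b, c⟩
    · exact Or.inl ⟨b, a, by rw [c, inf_comm]⟩
    · exact Or.inr ⟨b, a, by rw [c, sup_comm]⟩

/-- (a) implies (b). -/
lemma lemA (hsc : SimplyConnected V) :
    ∀ (x : ℕ → V) (n : ℕ), IsZigzag x n → 2 ≤ n → ¬x 0 ≤ x n ∧ ¬x n ≤ x 0 := by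
  classical
  by_contra hcon
  push_neg at hcon
  obtain ⟨x0, n0, hzz0, hn0, hcomp0⟩ := hcon
  have hex : ∃ m, 2 ≤ m ∧ ∃ x : ℕ → V, IsZigzag x m ∧ x 0 ≤ x m := by
    by_cases h : x0 0 ≤ x0 n0
    · exact ⟨n0, hn0, x0, hzz0, h⟩
    · refine ⟨n0, hn0, fun i => x0 (n0 - i), zz_reverse hzz0, ?_⟩
      simpa using hcomp0 h
  set m := Nat.find hex with hmdef
  have hQm : 2 ≤ m ∧ ∃ x : ℕ → V, IsZigzag x m ∧ x 0 ≤ x m := Nat.find_spec hex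
  have hmin : ∀ k, k < m → ¬(2 ≤ k ∧ ∃ x : ℕ → V, IsZigzag x k ∧ x 0 ≤ x k) :=
    fun k hk => Nat.find_min hex hk
  clear_value m
  obtain ⟨hm2, x, hzz, hle⟩ := hQm
  have noComp : ∀ (y : ℕ → V) (k : ℕ), IsZigzag y k → 2 ≤ k → k < m →
      ¬y 0 ≤ y k ∧ ¬y k ≤ y 0 := by
    intro y k hy hk2 hkm
    constructor
    · intro h; exact hmin k hkm ⟨hk2, y, hy, h⟩
    · intro h
      refine hmin k hkm ⟨hk2, fun i => y (k - i), zz_reverse hy, ?_⟩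
      simpa using h
  -- Step 1 : x 0 < x 1
  have hstep0 : x 0 < x 1 := by
    rcases hzz.1 0 (by omega) with h | h
    · exact h
    · exfalso
      by_cases hm2' : m = 2
      · subst hm2'
        rcases hzz.2 0 (by omega) with ⟨_, _, c⟩ | ⟨a, _, _⟩
        · have : x 1 = x 0 := by rw [c, inf_eq_left.2 hle]
          exact absurd this (ne_of_lt h)
        · exact absurd a (lt_asymm h)
      · have hm1 : m - 1 + 1 = m := by omega
        have hzs : IsZigzag (fun k => x (k + 1)) (m - 1) :=
          zz_shift (by rw [hm1]; exact hzz)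
        refine (noComp _ (m - 1) hzs (by omega) (by omega)).1 ?_
        have hxm : x 1 ≤ x m := h.le.trans hle
        simpa [hm1] using hxm
  -- Step 2 : x (m-1) < x m
  have hstepm : x (m - 1) < x m := by
    have h1 := hzz.1 (m - 1) (by omega)
    rw [show m - 1 + 1 = m from by omega] at h1
    rcases h1 with h | h
    · exact h
    · exfalso
      by_cases hm2' : m = 2
      · subst hm2'
        rcases hzz.2 0 (by omega) with ⟨a, _, _⟩ | ⟨_, _, c⟩
        · exact absurd a (lt_asymm hstep0)
        · have : x 1 = x 2 := by rw [c, sup_eq_right.2 hle]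
          have h2 : x 2 < x 1 := by
            have : (2 : ℕ) - 1 = 1 := rfl
            simpa [this] using h
          exact absurd ‹x 1 = x 2› (ne_of_gt h2)
      · have h0 : x 0 ≤ x (m - 1) := hle.trans h.le
        exact (noComp x (m - 1) (zz_mono hzz (by omega)) (by omega) (by omega)).1 h0
  -- m ≥ 3
  have hm3 : 3 ≤ m := by
    by_contra h'
    have hm2' : m = 2 := by omega
    subst hm2'
    have h12 : x 1 < x 2 := by
      have : (2 : ℕ) - 1 = 1 := rfl
      simpa [this] using hstepm
    rcases hzz.2 0 (by omega) with ⟨a, _, _⟩ | ⟨_, b, _⟩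
    · exact absurd a (lt_asymm hstep0)
    · exact absurd b (lt_asymm h12)
  have hnc := noComp x (m - 1) (zz_mono hzz (by omega)) (by omega) (by omega)
  -- triple at m - 2 : sink
  have htri := hzz.2 (m - 2) (by omega)
  rw [show m - 2 + 1 = m - 1 from by omega, show m - 2 + 2 = m from by omega] at htri
  rcases htri with ⟨a, _, c⟩ | ⟨_, b, _⟩
  swap
  · exact absurd b (lt_asymm hstepm)
  -- the modified endpoint
  set e := x 0 ⊔ x (m - 1) with hedef
  have hee : e ≤ x m := sup_le hle hstepm.le
  have h1e : x (m - 1) < e :=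
    lt_of_le_of_ne le_sup_right fun he => hnc.1 (le_sup_left.trans he.ge)
  have h0e : x 0 < e :=
    lt_of_le_of_ne le_sup_left fun he => hnc.2 (le_sup_right.trans he.ge)
  have hsink : x (m - 1) = x (m - 2) ⊓ e := by
    apply le_antisymm
    · exact le_inf a.le le_sup_right
    · calc x (m - 2) ⊓ e ≤ x (m - 2) ⊓ x m := inf_le_inf_left _ hee
        _ = x (m - 1) := c.symm
  -- triple at 0 : peak
  rcases hzz.2 0 (by omega) with ⟨a0, _, _⟩ | ⟨_, b0, c0⟩
  · exact absurd a0 (lt_asymm hstep0)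
  -- the extended zigzag z of length m + 1 ending at x 0
  set z : ℕ → V := fun i => if i < m then x i else if i = m then e else x 0 with hzdef
  have hzlt : ∀ i, i < m → z i = x i := by
    intro i hi; simp only [hzdef]; rw [if_pos hi]
  have hzm : z m = e := by
    simp only [hzdef]; rw [if_neg (by omega)]; simp
  have hzm1 : z (m + 1) = x 0 := by
    simp only [hzdef]; rw [if_neg (by omega), if_neg (by omega)]
  have hzzz : IsZigzag z (m + 1) := by
    constructor
    · intro i hi
      rcases (by omega : i + 1 < m ∨ i + 1 = m ∨ i = m) with h | h | h
      · rw [hzlt i (by omega), hzlt (i + 1) (by omega)]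
        exact hzz.1 i (by omega)
      · rw [hzlt i (by omega), show i + 1 = m from h, hzm, show i = m - 1 from by omega]
        exact Or.inl h1e
      · rw [show i = m from h, hzm, hzm1]
        exact Or.inr h0e
    · intro i hi
      rcases (by omega : i + 2 < m ∨ i + 2 = m ∨ i + 1 = m) with h | h | h
      · rw [hzlt i (by omega), hzlt (i + 1) (by omega), hzlt (i + 2) (by omega)]
        exact hzz.2 i (by omega)
      · rw [hzlt i (by omega), hzlt (i + 1) (by omega), show i + 2 = m from h, hzm,
          show i + 1 = m - 1 from by omega, show i = m - 2 from by omega]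
        exact Or.inl ⟨a, h1e, hsink⟩
      · rw [hzlt i (by omega), show i + 2 = m + 1 from by omega, hzm1,
          show i + 1 = m from h, hzm, show i = m - 1 from by omega]
        exact Or.inr ⟨h1e, h0e, by rw [hedef, sup_comm]⟩
  -- x 1 and e are incomparable
  have hncz : ¬x 1 ≤ e ∧ ¬e ≤ x 1 := by
    have hz' : IsZigzag (fun i => z (i + 1)) (m - 1) :=
      zz_mono (zz_shift hzzz) (by omega)
    have h1 : z (0 + 1) = x 1 := by rw [show (0 : ℕ) + 1 = 1 from rfl, hzlt 1 (by omega)]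
    have h2 : z (m - 1 + 1) = e := by rw [show m - 1 + 1 = m from by omega, hzm]
    have := noComp _ (m - 1) hz' (by omega) (by omega)
    constructor
    · intro h
      exact this.1 (by show z (0 + 1) ≤ z (m - 1 + 1); rw [h1, h2]; exact h)
    · intro h
      exact this.2 (by show z (m - 1 + 1) ≤ z (0 + 1); rw [h1, h2]; exact h)
  -- the closing sink
  set y0 := x 1 ⊓ e with hy0def
  have hy1 : y0 < x 1 :=
    lt_of_le_of_ne inf_le_left fun he => hncz.1 (inf_eq_left.mp (hy0def.symm.trans he))
  have hye : y0 < e :=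
    lt_of_le_of_ne inf_le_right fun he => hncz.2 (inf_eq_right.mp (hy0def.symm.trans he))
  have h0y : x 0 ≤ y0 := le_inf hstep0.le le_sup_left
  have hpeak1 : x 1 = y0 ⊔ x 2 :=
    le_antisymm (by rw [c0]; exact sup_le_sup_right h0y _) (sup_le inf_le_left b0.le)
  have hpeake : e = x (m - 1) ⊔ y0 := by
    apply le_antisymm
    · rw [hedef]; exact sup_le (h0y.trans le_sup_right) le_sup_left
    · exact sup_le h1e.le inf_le_right
  -- the cycle
  set L := m + 1 with hLdef
  set w : ℕ → V := fun i => if i % L = 0 then y0 else z (i % L) with hwdef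
  have hw0 : ∀ t, t % L = 0 → w t = y0 := by
    intro t h; simp only [hwdef]; rw [if_pos h]
  have hwsmall : ∀ t, 0 < t → t < L → w t = z t := by
    intro t h1 h2
    simp only [hwdef]
    rw [Nat.mod_eq_of_lt h2, if_neg (by omega)]
  have hmodw : ∀ t, w t = w (t % L) := by
    intro t
    have hlt : t % L < L := Nat.mod_lt _ (by omega)
    simp only [hwdef]
    rw [Nat.mod_eq_of_lt hlt]
  have hper : ∀ t, w (t + L) = w t := by
    intro t
    rw [hmodw (t + L), hmodw t, Nat.add_mod_right]
  refine hsc w L ⟨by omega, ?_, ?_⟩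
  · intro i
    rw [show i + 2 * L = i + L + L from by omega, hper, hper]
  · intro i
    have hiL : i % L < L := Nat.mod_lt _ (by omega)
    have e1 : w (i + 1) = w (i % L + 1) := by
      rw [hmodw (i + 1), hmodw (i % L + 1), Nat.mod_add_mod]
    have e2 : w (i + 2) = w (i % L + 2) := by
      rw [hmodw (i + 2), hmodw (i % L + 2), Nat.mod_add_mod]
    rw [hmodw i, e1, e2]
    rcases (by omega : i % L = 0 ∨ (1 ≤ i % L ∧ i % L + 2 < L) ∨ i % L + 2 = L ∨ i % L + 1 = L)
      with h | ⟨ha', hb'⟩ | h | h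
    · rw [h, show (0 : ℕ) + 1 = 1 from rfl, show (0 : ℕ) + 2 = 2 from rfl,
        hw0 0 (by simp), hwsmall 1 (by omega) (by omega), hwsmall 2 (by omega) (by omega),
        hzlt 1 (by omega), hzlt 2 (by omega)]
      exact Or.inr ⟨hy1, b0, hpeak1⟩
    · rw [hwsmall (i % L) (by omega) (by omega), hwsmall (i % L + 1) (by omega) (by omega),
        hwsmall (i % L + 2) (by omega) (by omega)]
      exact hzzz.2 (i % L) (by omega)
    · rw [show i % L = m - 1 from by omega, show m - 1 + 1 = m from by omega,
        show m - 1 + 2 = L from by omega, hwsmall (m - 1) (by omega) (by omega),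
        hwsmall m (by omega) (by omega), hw0 L (Nat.mod_self L),
        hzlt (m - 1) (by omega), hzm]
      exact Or.inr ⟨h1e, hye, hpeake⟩
    · have hm2mod : (m + 2) % L = 1 := by
        rw [show m + 2 = L + 1 from by omega, Nat.add_mod_left]
        exact Nat.mod_eq_of_lt (by omega)
      have hwm2 : w (m + 2) = x 1 := by
        simp only [hwdef]
        rw [hm2mod, if_neg (by omega)]
        exact hzlt 1 (by omega)
      rw [show i % L = m from by omega, show m + 1 = L from rfl,
        hwsmall m (by omega) (by omega), hw0 L (Nat.mod_self L), hzm]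
      rw [show L + 1 = m + 2 from by omega, hwm2]
      exact Or.inl ⟨hye, hy1, by rw [hy0def, inf_comm]⟩

/-- (b) implies (a). -/
lemma lemB (hb : ∀ (x : ℕ → V) (n : ℕ), IsZigzag x n → 2 ≤ n → ¬x 0 ≤ x n ∧ ¬x n ≤ x 0) :
    SimplyConnected V := by
  intro x n hc
  obtain ⟨hn, hper, htri⟩ := hc
  have hzz : IsZigzag x (2 * n) := by
    constructor
    · intro i _
      rcases htri i with ⟨a, _, _⟩ | ⟨a, _, _⟩
      · exact Or.inr a
      · exact Or.inl a
    · intro i _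
      exact htri i
  have h0 : x (0 + 2 * n) = x 0 := hper 0
  have h1 : x 0 = x (2 * n) := by simpa using h0.symm
  exact (hb x (2 * n) hzz (by omega)).1 h1.le

/-- (c) implies (b). -/
lemma lemC (hc : ∀ (x : ℕ → V) (m : ℕ), IsZigzag x m → ∀ i ≤ m,
      x 0 ⊓ x m ≤ x i ∧ x i ≤ x 0 ⊔ x m) :
    ∀ (x : ℕ → V) (n : ℕ), IsZigzag x n → 2 ≤ n → ¬x 0 ≤ x n ∧ ¬x n ≤ x 0 := by
  intro x n hzz hn
  constructor
  · intro hle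
    have hlow : ∀ i ≤ n, x 0 ≤ x i := by
      intro i hi
      have := (hc x n hzz i hi).1
      calc x 0 = x 0 ⊓ x n := (inf_eq_left.2 hle).symm
        _ ≤ x i := this
    rcases hzz.2 0 hn with ⟨a, _, _⟩ | ⟨_, b, c⟩
    · exact absurd (hlow 1 (by omega)) (not_le_of_gt a)
    · have : x 1 = x 2 := by
        rw [c, sup_eq_right.2 (hlow 2 hn)]
      exact absurd this (ne_of_gt b)
  · intro hle
    have hup : ∀ i ≤ n, x i ≤ x 0 := by
      intro i hi
      have := (hc x n hzz i hi).2
      calc x i ≤ x 0 ⊔ x n := this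
        _ = x 0 := sup_eq_left.2 hle
    rcases hzz.2 0 hn with ⟨_, b, c⟩ | ⟨a, _, _⟩
    · have : x 1 = x 2 := by
        rw [c, inf_eq_right.2 (hup 2 hn)]
      exact absurd this (ne_of_lt b)
    · exact absurd (hup 1 (by omega)) (not_le_of_gt a)

/-- (b) implies (c). -/
lemma lemD (hb : ∀ (x : ℕ → V) (n : ℕ), IsZigzag x n → 2 ≤ n → ¬x 0 ≤ x n ∧ ¬x n ≤ x 0) :
    ∀ (x : ℕ → V) (m : ℕ), IsZigzag x m → ∀ i ≤ m,
      x 0 ⊓ x m ≤ x i ∧ x i ≤ x 0 ⊔ x m := by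
  have key : ∀ m : ℕ, ∀ x : ℕ → V, IsZigzag x m → ∀ i ≤ m,
      x 0 ⊓ x m ≤ x i ∧ x i ≤ x 0 ⊔ x m := by
    intro m
    induction m using Nat.strong_induction_on with
    | _ m IH =>
    intro x hzz
    rcases Nat.lt_or_ge m 2 with hm2 | hm2
    · intro i hi
      interval_cases m
      · interval_cases i
        · exact ⟨inf_le_left, le_sup_left⟩
      · interval_cases i
        · exact ⟨inf_le_left, le_sup_left⟩
        · exact ⟨inf_le_right, le_sup_right⟩
    -- now 2 ≤ m
    have hm1 : m - 1 + 1 = m := by omega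
    -- shifted IH, restated
    have hIHs : ∀ i ≤ m - 1, x 1 ⊓ x m ≤ x (i + 1) ∧ x (i + 1) ≤ x 1 ⊔ x m := by
      have hzs : IsZigzag (fun k => x (k + 1)) (m - 1) := by
        have h' : IsZigzag x (m - 1 + 1) := by rw [hm1]; exact hzz
        exact zz_shift h'
      have hIH := IH (m - 1) (by omega) _ hzs
      intro i hi
      have := hIH i hi
      simpa [hm1] using this
    have hIHt : ∀ i ≤ m - 1, x 0 ⊓ x (m - 1) ≤ x i ∧ x i ≤ x 0 ⊔ x (m - 1) :=
      IH (m - 1) (by omega) x (zz_mono hzz (by omega))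
    have upper : ∀ j ≤ m, x j ≤ x 0 ⊔ x m := by
      by_contra hviol
      push_neg at hviol
      obtain ⟨j, hj, hjv⟩ := hviol
      have hstep : x m < x (m - 1) := by
        rcases hzz.1 (m - 1) (by omega) with h | h
        · rw [hm1] at h
          exfalso
          rcases Nat.lt_or_ge j m with hjm | hjm
          · exact hjv (((hIHt j (by omega)).2).trans (sup_le_sup_left h.le _))
          · have hjm' : j = m := by omega
            exact hjv (hjm' ▸ le_sup_right)
        · rw [hm1] at h; exact h
      have hstep0 : x 0 < x 1 := by
        rcases hzz.1 0 (by omega) with h | h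
        · exact h
        · exfalso
          rcases Nat.eq_zero_or_pos j with hj0 | hj0
          · exact hjv (hj0 ▸ le_sup_left)
          · have h2 := (hIHs (j - 1) (by omega)).2
            rw [show j - 1 + 1 = j from by omega] at h2
            exact hjv (h2.trans (sup_le_sup_right h.le _))
      by_cases hmm : m = 2
      · subst hmm
        rcases hzz.2 0 (by omega) with ⟨a, _, _⟩ | ⟨_, b, c⟩
        · exact absurd a (lt_asymm hstep0)
        · have hall : x j ≤ x 1 := by
            interval_cases j
            · exact hstep0.le
            · exact le_rfl
            · exact b.le
          exact hjv (hall.trans c.le)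
      · have hm3 : 3 ≤ m := by omega
        have hnotle : ¬x (m - 1) ≤ x 0 ⊔ x m := by
          intro hle
          rcases Nat.lt_or_ge j m with hjm | hjm
          · exact hjv (((hIHt j (by omega)).2).trans (sup_le le_sup_left hle))
          · have hjm' : j = m := by omega
            exact hjv (hjm' ▸ le_sup_right)
        have htri := hzz.2 (m - 2) (by omega)
        rw [show m - 2 + 1 = m - 1 from by omega, show m - 2 + 2 = m from by omega] at htri
        rcases htri with ⟨_, b, _⟩ | ⟨a, _, c⟩
        · exact absurd b (lt_asymm hstep)
        · set p := x 0 ⊔ x m with hp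
          set c2 := x (m - 1) ⊓ p with hc2
          have hxmc2 : x m ≤ c2 := le_inf hstep.le le_sup_right
          have hc2lt : c2 < x (m - 1) :=
            lt_of_le_of_ne inf_le_left fun he => hnotle (by rw [← he]; exact inf_le_right)
          have hc2p : c2 < p := by
            refine lt_of_le_of_ne inf_le_right fun he => ?_
            have hple : p ≤ x (m - 1) := by rw [← he]; exact inf_le_left
            have h0le : x 0 ≤ x (m - 1) := le_sup_left.trans hple
            exact (hb x (m - 1) (zz_mono hzz (by omega)) (by omega)).1 h0le
          have hpeak : x (m - 1) = x (m - 2) ⊔ c2 := by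
            apply le_antisymm
            · rw [c]; exact sup_le_sup_left hxmc2 _
            · exact sup_le a.le inf_le_left
          set z : ℕ → V := fun i => if i < m then x i else if i = m then c2 else p with hzdef
          have hzlt : ∀ i, i < m → z i = x i := by
            intro i hi; simp only [hzdef]; rw [if_pos hi]
          have hzm : z m = c2 := by
            simp only [hzdef]; rw [if_neg (by omega)]; simp
          have hzm1 : z (m + 1) = p := by
            simp only [hzdef]; rw [if_neg (by omega), if_neg (by omega)]
          have hzzz : IsZigzag z (m + 1) := by
            constructor
            · intro i hi
              rcases (by omega : i + 1 < m ∨ i + 1 = m ∨ i = m) with h | h | h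
              · rw [hzlt i (by omega), hzlt (i + 1) (by omega)]
                exact hzz.1 i (by omega)
              · rw [hzlt i (by omega), show i + 1 = m from h, hzm,
                  show i = m - 1 from by omega]
                exact Or.inr hc2lt
              · rw [show i = m from h, hzm, show m + 1 = m + 1 from rfl, hzm1]
                exact Or.inl hc2p
            · intro i hi
              rcases (by omega : i + 2 < m ∨ i + 2 = m ∨ i + 1 = m) with h | h | h
              · rw [hzlt i (by omega), hzlt (i + 1) (by omega), hzlt (i + 2) (by omega)]
                exact hzz.2 i (by omega)
              · rw [hzlt i (by omega), hzlt (i + 1) (by omega), show i + 2 = m from h, hzm,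
                  show i + 1 = m - 1 from by omega, show i = m - 2 from by omega]
                exact Or.inr ⟨a, hc2lt, hpeak⟩
              · rw [hzlt i (by omega), show i + 2 = m + 1 from by omega, hzm1,
                  show i + 1 = m from h, hzm, show i = m - 1 from by omega]
                exact Or.inl ⟨hc2lt, hc2p, hc2⟩
          have hend := (hb z (m + 1) hzzz (by omega)).1
          apply hend
          rw [hzlt 0 (by omega), hzm1]
          exact le_sup_left
    have lower : ∀ j ≤ m, x 0 ⊓ x m ≤ x j := by
      by_contra hviol
      push_neg at hviol
      obtain ⟨j, hj, hjv⟩ := hviol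
      have hstep : x (m - 1) < x m := by
        rcases hzz.1 (m - 1) (by omega) with h | h
        · rw [hm1] at h; exact h
        · rw [hm1] at h
          exfalso
          rcases Nat.lt_or_ge j m with hjm | hjm
          · exact hjv ((inf_le_inf_left _ h.le).trans (hIHt j (by omega)).1)
          · have hjm' : j = m := by omega
            exact hjv (hjm' ▸ inf_le_right)
      have hstep0 : x 1 < x 0 := by
        rcases hzz.1 0 (by omega) with h | h
        · exfalso
          rcases Nat.eq_zero_or_pos j with hj0 | hj0
          · exact hjv (hj0 ▸ inf_le_left)
          · have h2 := (hIHs (j - 1) (by omega)).1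
            rw [show j - 1 + 1 = j from by omega] at h2
            exact hjv ((inf_le_inf_right _ h.le).trans h2)
        · exact h
      by_cases hmm : m = 2
      · subst hmm
        rcases hzz.2 0 (by omega) with ⟨_, b, c⟩ | ⟨a, _, _⟩
        · have hall : x 1 ≤ x j := by
            interval_cases j
            · exact hstep0.le
            · exact le_rfl
            · exact b.le
          exact hjv (le_trans c.ge hall)
        · exact absurd a (lt_asymm hstep0)
      · have hm3 : 3 ≤ m := by omega
        have hnotle : ¬x 0 ⊓ x m ≤ x (m - 1) := by
          intro hle
          rcases Nat.lt_or_ge j m with hjm | hjm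
          · exact hjv ((le_inf inf_le_left hle).trans (hIHt j (by omega)).1)
          · have hjm' : j = m := by omega
            exact hjv (hjm' ▸ inf_le_right)
        have htri := hzz.2 (m - 2) (by omega)
        rw [show m - 2 + 1 = m - 1 from by omega, show m - 2 + 2 = m from by omega] at htri
        rcases htri with ⟨a, _, c⟩ | ⟨_, b, _⟩
        swap
        · exact absurd b (lt_asymm hstep)
        · set q := x 0 ⊓ x m with hq
          set c2 := x (m - 1) ⊔ q with hc2
          have hxmc2 : c2 ≤ x m := sup_le hstep.le inf_le_right
          have hc2lt : x (m - 1) < c2 :=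
            lt_of_le_of_ne le_sup_left fun he => hnotle (by rw [he]; exact le_sup_right)
          have hc2q : q < c2 := by
            refine lt_of_le_of_ne le_sup_right fun he => ?_
            have hple : x (m - 1) ≤ q := by rw [he]; exact le_sup_left
            have h0le : x (m - 1) ≤ x 0 := hple.trans inf_le_left
            exact (hb x (m - 1) (zz_mono hzz (by omega)) (by omega)).2 h0le
          have hsink : x (m - 1) = x (m - 2) ⊓ c2 := by
            apply le_antisymm
            · exact le_inf a.le le_sup_left
            · rw [c]; exact inf_le_inf_left _ hxmc2
          set z : ℕ → V := fun i => if i < m then x i else if i = m then c2 else q with hzdef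
          have hzlt : ∀ i, i < m → z i = x i := by
            intro i hi; simp only [hzdef]; rw [if_pos hi]
          have hzm : z m = c2 := by
            simp only [hzdef]; rw [if_neg (by omega)]; simp
          have hzm1 : z (m + 1) = q := by
            simp only [hzdef]; rw [if_neg (by omega), if_neg (by omega)]
          have hzzz : IsZigzag z (m + 1) := by
            constructor
            · intro i hi
              rcases (by omega : i + 1 < m ∨ i + 1 = m ∨ i = m) with h | h | h
              · rw [hzlt i (by omega), hzlt (i + 1) (by omega)]
                exact hzz.1 i (by omega)
              · rw [hzlt i (by omega), show i + 1 = m from h, hzm,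
                  show i = m - 1 from by omega]
                exact Or.inl hc2lt
              · rw [show i = m from h, hzm, hzm1]
                exact Or.inr hc2q
            · intro i hi
              rcases (by omega : i + 2 < m ∨ i + 2 = m ∨ i + 1 = m) with h | h | h
              · rw [hzlt i (by omega), hzlt (i + 1) (by omega), hzlt (i + 2) (by omega)]
                exact hzz.2 i (by omega)
              · rw [hzlt i (by omega), hzlt (i + 1) (by omega), show i + 2 = m from h, hzm,
                  show i + 1 = m - 1 from by omega, show i = m - 2 from by omega]
                exact Or.inl ⟨a, hc2lt, hsink⟩
              · rw [hzlt i (by omega), show i + 2 = m + 1 from by omega, hzm1,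
                  show i + 1 = m from h, hzm, show i = m - 1 from by omega]
                exact Or.inr ⟨hc2lt, hc2q, hc2⟩
          have hend := (hb z (m + 1) hzzz (by omega)).2
          apply hend
          rw [hzlt 0 (by omega), hzm1]
          exact inf_le_left
    exact fun i hi => ⟨lower i hi, upper i hi⟩
  exact fun x m h => key m x h

/-- Proposition: for a lattice `V` the following are equivalent:
(a) `V` is simply connected;
(b) the endpoints of every zigzag of length at least `2` are incomparable;
(c) every term of a zigzag lies between the infimum and the supremum of its endpoints. -/
theorem simplyConnected_tfae (V : Type*) [Lattice V] :
    (SimplyConnected V ↔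
      ∀ (x : ℕ → V) (n : ℕ), IsZigzag x n → 2 ≤ n → ¬x 0 ≤ x n ∧ ¬x n ≤ x 0) ∧
    (SimplyConnected V ↔
      ∀ (x : ℕ → V) (m : ℕ), IsZigzag x m → ∀ i ≤ m,
        x 0 ⊓ x m ≤ x i ∧ x i ≤ x 0 ⊔ x m) := by
  constructor
  · exact ⟨lemA, lemB⟩
  · exact ⟨fun h => lemD (lemA h), fun hc => lemB (lemC hc)⟩
end

section
/- Let U be a simply connected sublattice of a lattice V, and let (v_α : α < λ) be a well-ordering of V \ U such that for every β ≤ λ the set V_β = U ∪ {v_α : α < β} is a sublattice of V. Then V is simply connected. -/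
variable {V : Type*} [Lattice V]

/-- If `U` is a simply connected sublattice of `V` and `(v α)_{α < λ}` is a
well-ordered enumeration of `V \ U` such that every initial segment
`V_β = U ∪ {v α ∣ α < β}` is a sublattice of `V`, then `V` is simply connected. -/
theorem simplyConnected_of_wellOrdered_construction
    {ι : Type*} [LinearOrder ι] [WellFoundedLT ι]
    (U : Sublattice V) (hU : SimplyConnected ↥U)
    (v : ι → V) (hv : Function.Injective v)
    (hrange : Set.range v = (↑U : Set V)ᶜ)
    (hstep : ∀ β : ι, IsSublattice ((↑U : Set V) ∪ v '' {α | α < β})) :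
    SimplyConnected V := by
  intro x n hx
  obtain ⟨hn, hper, hzz⟩ := hx
  -- all values of x lie in the finite set T
  set T : Set V := x '' {j | j < 2 * n} with hT
  have hTfin : T.Finite := (Set.finite_Iio (2 * n)).image x
  have hmemT : ∀ i, x i ∈ T := by
    intro i
    induction i using Nat.strong_induction_on with
    | _ i ih =>
      rcases lt_or_ge i (2 * n) with h | h
      · exact ⟨i, h, rfl⟩
      · have hxe : x i = x (i - 2 * n) := by
          rw [← hper (i - 2 * n)]
          congr 1
          omega
        rw [hxe]
        exact ih _ (by omega)
  by_cases hall : ∀ i, x i ∈ (U : Set V)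
  · -- cycle lies in U; descend
    refine hU (fun i => ⟨x i, hall i⟩) n ⟨hn, fun i => Subtype.ext (hper i), fun i => ?_⟩
    rcases hzz i with ⟨h1, h2, h3⟩ | ⟨h1, h2, h3⟩
    · exact Or.inl ⟨by exact_mod_cast h1, by exact_mod_cast h2,
        Subtype.ext (by push_cast [Sublattice.coe_inf]; exact h3)⟩
    · exact Or.inr ⟨by exact_mod_cast h1, by exact_mod_cast h2,
        Subtype.ext (by push_cast [Sublattice.coe_sup]; exact h3)⟩
  · push_neg at hall
    obtain ⟨i₀, hi₀⟩ := hall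
    -- the set of indices whose value appears in the cycle
    set I : Set ι := v ⁻¹' T with hI
    have hIfin : I.Finite := hTfin.preimage hv.injOn
    have hIne : I.Nonempty := by
      have : x i₀ ∈ Set.range v := by
        rw [hrange]; exact hi₀
      obtain ⟨γ, hγ⟩ := this
      exact ⟨γ, by simp only [hI, Set.mem_preimage, hγ]; exact hmemT i₀⟩
    obtain ⟨α, hαI, hαmax'⟩ := Set.Finite.exists_maximalFor id I hIfin hIne
    have hαmax : ∀ γ ∈ I, id α ≤ id γ → id α = id γ :=
      fun γ hγ h => le_antisymm h (hαmax' hγ h)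
    have hαle : ∀ γ ∈ I, γ ≤ α := by
      intro γ hγ
      by_contra h
      push_neg at h
      have := hαmax γ hγ h.le
      simp only [id] at this
      exact h.ne' this.symm
    set W : Set V := (↑U : Set V) ∪ v '' {γ | γ < α} with hW
    have hvα : v α ∉ W := by
      rintro (h | ⟨γ, hγ, hγe⟩)
      · have : v α ∈ (↑U : Set V)ᶜ := by rw [← hrange]; exact ⟨α, rfl⟩
        exact this h
      · exact absurd (hv hγe) hγ.ne
    have h_other : ∀ i, x i ≠ v α → x i ∈ W := by
      intro i hne
      by_cases hUi : x i ∈ (U : Set V)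
      · exact Or.inl hUi
      · have : x i ∈ Set.range v := by rw [hrange]; exact hUi
        obtain ⟨γ, hγ⟩ := this
        have hγI : γ ∈ I := by simp only [hI, Set.mem_preimage, hγ]; exact hmemT i
        have : γ < α := lt_of_le_of_ne (hαle γ hγI) (fun h => hne (h ▸ hγ.symm))
        exact Or.inr ⟨γ, this, hγ⟩
    -- v α appears at some position j < 2n
    have : v α ∈ T := hαI
    obtain ⟨j, _, hj⟩ := this
    -- shift so that v α sits at position i + 1
    set i := j + 2 * n - 1 with hi
    have e1 : x (i + 1) = v α := by
      have : i + 1 = j + 2 * n := by omega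
      rw [this, hper]; exact hj
    have e2 : x (i + 2) = x (j + 1) := by
      have : i + 2 = (j + 1) + 2 * n := by omega
      rw [this, hper]
    rcases hzz i with ⟨h1, h2, h3⟩ | ⟨h1, h2, h3⟩
    · have hw1 : x i ∈ W := h_other i (fun h => h1.ne (e1 ▸ h).symm)
      have hw2 : x (i + 2) ∈ W := h_other (i + 2) (fun h => h2.ne (e1 ▸ h).symm)
      have : v α ∈ W := by rw [← e1, h3]; exact (hstep α).infClosed hw1 hw2
      exact hvα this
    · have hw1 : x i ∈ W := h_other i (fun h => h1.ne (e1 ▸ h))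
      have hw2 : x (i + 2) ∈ W := h_other (i + 2) (fun h => h2.ne (e1 ▸ h))
      have : v α ∈ W := by rw [← e1, h3]; exact (hstep α).supClosed hw1 hw2
      exact hvα this
end

section
/- Every zigzag of length at least 2 in a lattice is a weak zigzag; in particular, in a zigzag any two terms whose indices differ by 2 or by 3 are incomparable. -/
variable {V : Type*} [Lattice V]

/-- An *alternating sequence* of length `n`: alternatingly `x i ≤ x (i+1)` or
`x (i+1) ≤ x i` (one of the two possible phases). -/
def IsAlternating (x : ℕ → V) (n : ℕ) : Prop :=
  (∀ i < n, if Even i then x i ≤ x (i + 1) else x (i + 1) ≤ x i) ∨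
  (∀ i < n, if Even i then x (i + 1) ≤ x i else x i ≤ x (i + 1))

/-- A *weak zigzag*: an alternating sequence of length at least `2` such that any two
terms whose indices differ by `2` or by `3` are incomparable. -/
def IsWeakZigzag (x : ℕ → V) (n : ℕ) : Prop :=
  2 ≤ n ∧ IsAlternating x n ∧
  (∀ i, i + 2 ≤ n → ¬x i ≤ x (i + 2) ∧ ¬x (i + 2) ≤ x i) ∧
  (∀ i, i + 3 ≤ n → ¬x i ≤ x (i + 3) ∧ ¬x (i + 3) ≤ x i)


private lemma zig_two {V : Type*} [Lattice V] (x : ℕ → V) (n : ℕ) (h : IsZigzag x n) :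
    ∀ i, i + 2 ≤ n → ¬x i ≤ x (i + 2) ∧ ¬x (i + 2) ≤ x i := by
  intro i hi
  rcases h.2 i hi with ⟨h1, h2, h3⟩ | ⟨h1, h2, h3⟩
  · constructor
    · intro hle
      rw [inf_eq_left.2 hle] at h3
      exact absurd h3 (ne_of_lt h1)
    · intro hle
      rw [inf_eq_right.2 hle] at h3
      exact absurd h3 (ne_of_lt h2)
  · constructor
    · intro hle
      rw [sup_eq_right.2 hle] at h3
      exact absurd h3.symm (ne_of_lt h2)
    · intro hle
      rw [sup_eq_left.2 hle] at h3
      exact absurd h3.symm (ne_of_lt h1)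

private lemma zig_three {V : Type*} [Lattice V] (x : ℕ → V) (n : ℕ) (h : IsZigzag x n) :
    ∀ i, i + 3 ≤ n → ¬x i ≤ x (i + 3) ∧ ¬x (i + 3) ≤ x i := by
  intro i hi
  have hi2 : i + 2 ≤ n := by omega
  have hi2' : (i + 1) + 2 ≤ n := by omega
  rcases h.2 i hi2 with ⟨h1, h2, h3⟩ | ⟨h1, h2, h3⟩
  · -- sink at i+1, so peak at i+2
    rcases h.2 (i + 1) hi2' with ⟨g1, g2, g3⟩ | ⟨g1, g2, g3⟩
    · exact absurd h2 (not_lt_of_gt g1)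
    · have e2 : x (i + 1 + 2) = x (i + 3) := by norm_num
      have e1 : x (i + 1 + 1) = x (i + 2) := by norm_num
      rw [e1, e2] at g2 g3
      constructor
      · intro hle
        have : x (i + 1) ≤ x (i + 3) := le_trans h1.le hle
        rw [sup_eq_right.2 this] at g3
        exact absurd g3.symm (ne_of_lt g2)
      · intro hle
        have : x (i + 2) ≤ x i := by
          rw [g3]; exact sup_le h1.le hle
        rw [inf_eq_right.2 this] at h3
        exact absurd h3 (ne_of_lt h2)
  · -- peak at i+1, so sink at i+2
    rcases h.2 (i + 1) hi2' with ⟨g1, g2, g3⟩ | ⟨g1, g2, g3⟩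
    · have e2 : x (i + 1 + 2) = x (i + 3) := by norm_num
      have e1 : x (i + 1 + 1) = x (i + 2) := by norm_num
      rw [e1, e2] at g2 g3
      rw [e1] at g1
      constructor
      · intro hle
        have : x i ≤ x (i + 2) := by
          rw [g3]; exact le_inf h1.le hle
        rw [sup_eq_right.2 this] at h3
        exact absurd h3.symm (ne_of_lt g1)
      · intro hle
        have : x (i + 3) ≤ x (i + 1) := le_trans hle h1.le
        rw [inf_eq_right.2 this] at g3
        exact absurd g3 (ne_of_lt g2)
    · exact absurd h2 (not_lt_of_gt g1)

private lemma zig_alt_pos {V : Type*} [Lattice V] (x : ℕ → V) (n : ℕ) (h : IsZigzag x n)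
    (h01 : x 0 < x 1) : ∀ i < n, if Even i then x i < x (i + 1) else x (i + 1) < x i := by
  intro i
  induction i with
  | zero => intro _; simpa using h01
  | succ k ih =>
    intro hk
    have hk' : k < n := by omega
    have hk2 : k + 2 ≤ n := by omega
    have prev := ih hk'
    rcases h.2 k hk2 with ⟨h1, h2, h3⟩ | ⟨h1, h2, h3⟩
    · -- sink at k+1 : x(k+1) < x k, so ¬ Even k
      have hk_odd : ¬ Even k := by
        intro he
        rw [if_pos he] at prev
        exact absurd h1 (not_lt_of_gt prev)
      have : Even (k + 1) := Nat.even_add_one.2 hk_odd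
      rw [if_pos this]
      exact h2
    · have hk_even : Even k := by
        by_contra he
        rw [if_neg he] at prev
        exact absurd h1 (not_lt_of_gt prev)
      have : ¬ Even (k + 1) := by simp [Nat.even_add_one, hk_even]
      rw [if_neg this]
      exact h2

private lemma zig_alt {V : Type*} [Lattice V] (x : ℕ → V) (n : ℕ) (h : IsZigzag x n)
    (hn : 1 ≤ n) : IsAlternating x n := by
  rcases h.1 0 (by omega) with h01 | h01
  · left
    intro i hi
    have := zig_alt_pos x n h h01 i hi
    split at this <;> rename_i he <;> [rw [if_pos he]; rw [if_neg he]] <;> exact this.le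
  · -- x 1 < x 0 : consider the order dual
    right
    intro i hi
    have hd : IsZigzag (V := Vᵒᵈ) (fun j => OrderDual.toDual (x j)) n := by
      constructor
      · intro j hj
        rcases h.1 j hj with hh | hh
        · right; exact hh
        · left; exact hh
      · intro j hj
        rcases h.2 j hj with ⟨h1, h2, h3⟩ | ⟨h1, h2, h3⟩
        · right; exact ⟨h1, h2, h3⟩
        · left; exact ⟨h1, h2, h3⟩
    have := zig_alt_pos (V := Vᵒᵈ) (fun j => OrderDual.toDual (x j)) n hd h01 i hi
    split at this <;> rename_i he <;> [rw [if_pos he]; rw [if_neg he]] <;> exact this.le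

/-- Every zigzag of length at least `2` is a weak zigzag; in particular in a zigzag
any two terms whose indices differ by `2` or by `3` are incomparable. -/
theorem isWeakZigzag_of_isZigzag (x : ℕ → V) (n : ℕ) (h : IsZigzag x n) :
    (2 ≤ n → IsWeakZigzag x n) ∧
    (∀ i, i + 2 ≤ n → ¬x i ≤ x (i + 2) ∧ ¬x (i + 2) ≤ x i) ∧
    (∀ i, i + 3 ≤ n → ¬x i ≤ x (i + 3) ∧ ¬x (i + 3) ≤ x i) := by
  refine ⟨?_, zig_two x n h, zig_three x n h⟩
  intro hn
  exact ⟨hn, zig_alt x n h (by omega), zig_two x n h, zig_three x n h⟩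
end

section
/- Let a_0,b_0,x_2,…,x_n be a zigzag in a lattice (beginning with the sink a_0 and peak b_0) and let c be an element with c ≥ a_0 and c ≱ b_0. Then: (1) if c < b_0, the sequence c,b_0,x_2,…,x_n is a zigzag; (2) if c and b_0 are incomparable, the sequence c,a_0,b_0,x_2,…,x_n is a weak zigzag. -/
variable {V : Type*} [Lattice V]

lemma zz_inc2 {x : ℕ → V} {n : ℕ} (hz : IsZigzag x n) (i : ℕ) (h : i + 2 ≤ n) :
    ¬x i ≤ x (i + 2) ∧ ¬x (i + 2) ≤ x i := by
  rcases hz.2 i h with ⟨h1, h2, h3⟩ | ⟨h1, h2, h3⟩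
  · constructor
    · intro hle
      have : x i ≤ x (i + 1) := h3 ▸ le_inf le_rfl hle
      exact absurd this (not_le_of_gt h1)
    · intro hle
      have : x (i + 2) ≤ x (i + 1) := h3 ▸ le_inf hle le_rfl
      exact absurd this (not_le_of_gt h2)
  · constructor
    · intro hle
      have : x (i + 1) ≤ x (i + 2) := h3 ▸ sup_le hle le_rfl
      exact absurd this (not_le_of_gt h2)
    · intro hle
      have : x (i + 1) ≤ x i := h3 ▸ sup_le le_rfl hle
      exact absurd this (not_le_of_gt h1)

lemma zz_inc3 {x : ℕ → V} {n : ℕ} (hz : IsZigzag x n) (i : ℕ) (h : i + 3 ≤ n) :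
    ¬x i ≤ x (i + 3) ∧ ¬x (i + 3) ≤ x i := by
  have hi2 := zz_inc2 hz i (by omega)
  have hi2' := zz_inc2 hz (i + 1) (by omega)
  rcases hz.2 i (by omega) with ⟨h1, h2, h3⟩ | ⟨h1, h2, h3⟩
  · rcases hz.2 (i + 1) (by omega) with ⟨g1, g2, g3⟩ | ⟨g1, g2, g3⟩
    · exact absurd h2 (not_lt_of_gt g1)
    · constructor
      · intro hle
        have : x i ≤ x (i + 2) := le_trans hle (le_of_lt g2)
        exact hi2.1 this
      · intro hle
        have hx1 : x (i + 1) ≤ x i := le_of_lt h1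
        have : x (i + 2) ≤ x i := by
          have : x (i + 1 + 2) = x (i + 3) := by norm_num
          rw [g3]
          exact sup_le hx1 (by rwa [this])
        exact hi2.2 this
  · rcases hz.2 (i + 1) (by omega) with ⟨g1, g2, g3⟩ | ⟨g1, g2, g3⟩
    · constructor
      · intro hle
        have : x i ≤ x (i + 2) := by
          rw [g3]
          have h13 : x (i + 1 + 2) = x (i + 3) := by norm_num
          exact le_inf (le_of_lt h1) (by rwa [h13])
        exact hi2.1 this
      · intro hle
        have : x (i + 2) ≤ x i := le_trans (le_of_lt g2) hle
        exact hi2.2 this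
    · exact absurd h2 (not_lt_of_gt g1)

lemma zz_alt {x : ℕ → V} {n : ℕ} (hz : IsZigzag x n) (h01 : x 0 < x 1) :
    ∀ j < n, if Even j then x j < x (j + 1) else x (j + 1) < x j := by
  intro j hj
  induction j with
  | zero => simpa using h01
  | succ k ih =>
    have hk := ih (by omega)
    rcases hz.2 k (by omega) with ⟨h1, h2, _⟩ | ⟨h1, h2, _⟩
    · by_cases he : Even k
      · simp [he] at hk; exact absurd hk (not_lt_of_gt h1)
      · simp [Nat.even_add_one, he]; exact h2
    · by_cases he : Even k
      · simp [Nat.even_add_one, he]; exact h2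
      · simp [he] at hk; exact absurd hk (not_lt_of_gt h1)

/-- Let `a₀, b₀, x₂, …, xₙ` be a zigzag beginning with the sink `a₀ = x 0` and the
peak `b₀ = x 1`, and let `c` satisfy `a₀ ≤ c` and `c ≱ b₀`. Then
(1) if `c < b₀`, the sequence `c, b₀, x₂, …, xₙ` is a zigzag, and
(2) if `c` and `b₀` are incomparable, the sequence `c, a₀, b₀, x₂, …, xₙ` is a
weak zigzag. -/
theorem zigzag_prepend (x : ℕ → V) (n : ℕ) (hn : 1 ≤ n) (hz : IsZigzag x n)
    (h01 : x 0 < x 1) (c : V) (hca : x 0 ≤ c) (hcb : ¬x 1 ≤ c) :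
    (c < x 1 → IsZigzag (fun i => if i = 0 then c else x i) n) ∧
    (¬c ≤ x 1 → IsWeakZigzag (fun i => if i = 0 then c else x (i - 1)) (n + 1)) := by
  constructor
  · intro hc1
    constructor
    · intro i hi
      by_cases h0 : i = 0
      · subst h0; simpa using Or.inl hc1
      · simp only [h0, if_false, Nat.add_eq_zero, false_and, if_neg (by omega : ¬ i + 1 = 0)]
        simpa [h0] using hz.1 i hi
    · intro i h2
      by_cases h0 : i = 0
      · subst h0
        rcases hz.2 0 h2 with ⟨h1, _, _⟩ | ⟨h1, h2', h3⟩
        · exact absurd h1 (not_lt_of_gt h01)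
        · right
          simp only [if_pos rfl, if_neg (by norm_num : ¬ (1:ℕ) = 0),
            if_neg (by norm_num : ¬ (2:ℕ) = 0)]
          refine ⟨hc1, h2', le_antisymm ?_ (sup_le (le_of_lt hc1) (le_of_lt h2'))⟩
          calc x 1 = x 0 ⊔ x 2 := h3
          _ ≤ c ⊔ x 2 := sup_le_sup_right hca _
      · simp only [if_neg h0, if_neg (by omega : ¬ i + 1 = 0), if_neg (by omega : ¬ i + 2 = 0)]
        exact hz.2 i h2
  · intro hcb'
    refine ⟨by omega, ?_, ?_, ?_⟩
    · right
      intro i hi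
      match i with
      | 0 => simpa using hca
      | j + 1 =>
        simp only [if_neg (by omega : ¬ j + 1 = 0), if_neg (by omega : ¬ j + 1 + 1 = 0),
          Nat.add_sub_cancel, show j + 1 + 1 - 1 = j + 1 by omega]
        have := zz_alt hz h01 j (by omega)
        by_cases he : Even j
        · simp [he] at this; simp [Nat.even_add_one, he]; exact le_of_lt this
        · simp [he] at this; simp [Nat.even_add_one, he]; exact le_of_lt this
    · intro i hi
      match i with
      | 0 => simpa using ⟨hcb', hcb⟩
      | j + 1 =>
        simp only [if_neg (by omega : ¬ j + 1 = 0), if_neg (by omega : ¬ j + 1 + 2 = 0),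
          Nat.add_sub_cancel, show j + 1 + 2 - 1 = j + 2 by omega]
        exact zz_inc2 hz j (by omega)
    · intro i hi
      match i with
      | 0 =>
        simp only [if_pos rfl, if_neg (by norm_num : ¬ (0 + 3 : ℕ) = 0),
          show (0 + 3 : ℕ) - 1 = 2 by norm_num]
        rcases hz.2 0 (by omega) with ⟨h1, _, _⟩ | ⟨h1, h2', h3⟩
        · exact absurd h1 (not_lt_of_gt h01)
        · constructor
          · intro hle
            exact hcb' (le_trans hle (le_of_lt h2'))
          · intro hle
            exact hcb (h3 ▸ sup_le hca hle)
      | j + 1 =>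
        simp only [if_neg (by omega : ¬ j + 1 = 0), if_neg (by omega : ¬ j + 1 + 3 = 0),
          Nat.add_sub_cancel, show j + 1 + 3 - 1 = j + 3 by omega]
        exact zz_inc3 hz j (by omega)
end

section
/- Let V be an N-geometry which is a lattice, and let V' be a proper extension of V by a single element which is again an N-geometry. Then V' is a simple extension of V if and only if V' is a lattice and V is a sublattice of V'. -/
/-- An *N-geometry*: a partial order with smallest element `⊥` and largest element `⊤`,
partitioned into layers indexed by `-1, 0, …, N+1` (recorded by the function `layer`),
such that the layer index is strictly monotone, `⊥` lies in layer `-1` and `⊤` lies in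
layer `N+1`. -/
structure NGeometry (N : ℕ) (V : Type*) [PartialOrder V] [BoundedOrder V] where
  layer : V → ℤ
  layer_bot : layer ⊥ = -1
  layer_top : layer ⊤ = (N : ℤ) + 1
  layer_bounds : ∀ v : V, -1 ≤ layer v ∧ layer v ≤ (N : ℤ) + 1
  layer_strictMono : ∀ v w : V, v < w → layer v < layer w

/-- Let `V'` be an `N`-geometry and let `s ⊆ V'` be the complement of a single point
`x` (so that `V'` is a proper extension of `V = s` by one element), where `s` contains
`⊥` and `⊤` and, with the induced order, is a lattice.  Then `V'` is a *simple
extension* of `s` (i.e. there are `a, b ∈ s` with `a < x < b`, the layer of `x`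
strictly between those of `a` and `b`, such that for all `c ∈ s` one has
`c < x ↔ c ≤ a` and `x < c ↔ b ≤ c`) if and only if `V'` is a lattice and `s` is a
sublattice of `V'` (i.e. suprema and infima of pairs of elements of `s`, computed in
`V'`, exist and belong to `s`). -/
theorem simple_extension_iff_lattice {N : ℕ} {V' : Type*}
    [PartialOrder V'] [BoundedOrder V'] (G : NGeometry N V')
    (s : Set V') (x : V') (hx : x ∉ s) (hcompl : sᶜ = {x})
    (hbot : ⊥ ∈ s) (htop : ⊤ ∈ s)
    (hlat : ∀ a ∈ s, ∀ b ∈ s,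
      (∃ u ∈ s, a ≤ u ∧ b ≤ u ∧ ∀ w ∈ s, a ≤ w → b ≤ w → u ≤ w) ∧
      (∃ l ∈ s, l ≤ a ∧ l ≤ b ∧ ∀ w ∈ s, w ≤ a → w ≤ b → w ≤ l)) :
    (∃ a ∈ s, ∃ b ∈ s, a < x ∧ x < b ∧
        G.layer a < G.layer x ∧ G.layer x < G.layer b ∧
        ∀ c ∈ s, (c < x ↔ c ≤ a) ∧ (x < c ↔ b ≤ c)) ↔
      ((∀ u v : V', (∃ w, IsLUB {u, v} w) ∧ (∃ w, IsGLB {u, v} w)) ∧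
       (∀ u ∈ s, ∀ v ∈ s,
          (∀ w, IsLUB {u, v} w → w ∈ s) ∧ (∀ w, IsGLB {u, v} w → w ∈ s))) := by

  classical
  have hmem : ∀ c : V', c ∉ s ↔ c = x := by
    intro c
    constructor
    · intro h
      have hc : c ∈ sᶜ := h
      rw [hcompl] at hc
      exact hc
    · rintro rfl; exact hx
  have hub : ∀ u v w : V', w ∈ upperBounds ({u, v} : Set V') ↔ u ≤ w ∧ v ≤ w := by
    intro u v w
    constructor
    · intro h
      exact ⟨h (Set.mem_insert u {v}), h (Set.mem_insert_of_mem u rfl)⟩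
    · rintro ⟨h1, h2⟩ z hz
      rcases hz with rfl | rfl
      · exact h1
      · exact h2
  have hlb : ∀ u v w : V', w ∈ lowerBounds ({u, v} : Set V') ↔ w ≤ u ∧ w ≤ v := by
    intro u v w
    constructor
    · intro h
      exact ⟨h (Set.mem_insert u {v}), h (Set.mem_insert_of_mem u rfl)⟩
    · rintro ⟨h1, h2⟩ z hz
      rcases hz with rfl | rfl
      · exact h1
      · exact h2
  constructor
  · rintro ⟨a, ha, b, hb, hax, hxb, -, -, hprop⟩
    have hlea : ∀ c ∈ s, c ≤ x → c ≤ a := by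
      intro c hc hcx
      rcases hcx.lt_or_eq with h | h
      · exact (hprop c hc).1.mp h
      · subst h; exact absurd hc hx
    have hgeb : ∀ c ∈ s, x ≤ c → b ≤ c := by
      intro c hc hcx
      rcases hcx.lt_or_eq with h | h
      · exact (hprop c hc).2.mp h
      · rw [← h] at hc; exact absurd hc hx
    -- suprema of pairs in s exist and lie in s
    have lubS : ∀ u ∈ s, ∀ v ∈ s, ∃ w ∈ s, IsLUB ({u, v} : Set V') w := by
      intro u hu v hv
      obtain ⟨⟨w, hw, huw, hvw, hle⟩, -⟩ := hlat u hu v hv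
      refine ⟨w, hw, (hub u v w).mpr ⟨huw, hvw⟩, ?_⟩
      intro z hz
      rw [hub] at hz
      by_cases hzs : z ∈ s
      · exact hle z hzs hz.1 hz.2
      · have hzx : z = x := (hmem z).mp hzs
        subst hzx
        exact le_trans (hle a ha (hlea u hu hz.1) (hlea v hv hz.2)) hax.le
    have glbS : ∀ u ∈ s, ∀ v ∈ s, ∃ w ∈ s, IsGLB ({u, v} : Set V') w := by
      intro u hu v hv
      obtain ⟨-, ⟨w, hw, huw, hvw, hle⟩⟩ := hlat u hu v hv
      refine ⟨w, hw, (hlb u v w).mpr ⟨huw, hvw⟩, ?_⟩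
      intro z hz
      rw [hlb] at hz
      by_cases hzs : z ∈ s
      · exact hle z hzs hz.1 hz.2
      · have hzx : z = x := (hmem z).mp hzs
        subst hzx
        exact le_trans hxb.le (hle b hb (hgeb u hu hz.1) (hgeb v hv hz.2))
    -- suprema and infima of pairs involving x exist
    have lubX : ∀ v : V', ∃ w, IsLUB ({x, v} : Set V') w := by
      intro v
      by_cases hvs : v ∈ s
      · by_cases hvx : v ≤ x
        · exact ⟨x, (hub x v x).mpr ⟨le_refl x, hvx⟩, fun z hz => ((hub x v z).mp hz).1⟩
        · obtain ⟨w, hws, hw⟩ := lubS b hb v hvs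
          have hbw : b ≤ w := ((hub b v w).mp hw.1).1
          have hvw : v ≤ w := ((hub b v w).mp hw.1).2
          refine ⟨w, (hub x v w).mpr ⟨(hxb.trans_le hbw).le, hvw⟩, ?_⟩
          intro z hz
          rw [hub] at hz
          by_cases hzs : z ∈ s
          · have hbz : b ≤ z := hgeb z hzs hz.1
            exact hw.2 ((hub b v z).mpr ⟨hbz, hz.2⟩)
          · have hzx : z = x := (hmem z).mp hzs
            subst hzx
            exact absurd hz.2 hvx
      · have hvx : v = x := (hmem v).mp hvs
        subst hvx
        exact ⟨v, (hub v v v).mpr ⟨le_refl v, le_refl v⟩, fun z hz => ((hub v v z).mp hz).1⟩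
    have glbX : ∀ v : V', ∃ w, IsGLB ({x, v} : Set V') w := by
      intro v
      by_cases hvs : v ∈ s
      · by_cases hvx : x ≤ v
        · exact ⟨x, (hlb x v x).mpr ⟨le_refl x, hvx⟩, fun z hz => ((hlb x v z).mp hz).1⟩
        · obtain ⟨w, hws, hw⟩ := glbS a ha v hvs
          have haw : w ≤ a := ((hlb a v w).mp hw.1).1
          have hvw : w ≤ v := ((hlb a v w).mp hw.1).2
          refine ⟨w, (hlb x v w).mpr ⟨(haw.trans_lt hax).le, hvw⟩, ?_⟩
          intro z hz
          rw [hlb] at hz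
          by_cases hzs : z ∈ s
          · have haz : z ≤ a := hlea z hzs hz.1
            exact hw.2 ((hlb a v z).mpr ⟨haz, hz.2⟩)
          · have hzx : z = x := (hmem z).mp hzs
            subst hzx
            exact absurd hz.2 hvx
      · have hvx : v = x := (hmem v).mp hvs
        subst hvx
        exact ⟨v, (hlb v v v).mpr ⟨le_refl v, le_refl v⟩, fun z hz => ((hlb v v z).mp hz).1⟩
    constructor
    · intro u v
      constructor
      · by_cases hus : u ∈ s
        · by_cases hvs : v ∈ s
          · obtain ⟨w, -, hw⟩ := lubS u hus v hvs
            exact ⟨w, hw⟩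
          · have hvx : v = x := (hmem v).mp hvs
            subst hvx
            obtain ⟨w, hw⟩ := lubX u
            rw [Set.pair_comm] at hw
            exact ⟨w, hw⟩
        · have hux : u = x := (hmem u).mp hus
          subst hux
          exact lubX v
      · by_cases hus : u ∈ s
        · by_cases hvs : v ∈ s
          · obtain ⟨w, -, hw⟩ := glbS u hus v hvs
            exact ⟨w, hw⟩
          · have hvx : v = x := (hmem v).mp hvs
            subst hvx
            obtain ⟨w, hw⟩ := glbX u
            rw [Set.pair_comm] at hw
            exact ⟨w, hw⟩
        · have hux : u = x := (hmem u).mp hus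
          subst hux
          exact glbX v
    · intro u hu v hv
      constructor
      · intro w hw
        obtain ⟨w', hw's, hw'⟩ := lubS u hu v hv
        rwa [hw.unique hw']
      · intro w hw
        obtain ⟨w', hw's, hw'⟩ := glbS u hu v hv
        rwa [hw.unique hw']
  · rintro ⟨hlattice, hsub⟩
    have hbotx : (⊥ : V') < x := bot_le.lt_of_ne (by rintro rfl; exact hx hbot)
    have hxtop : x < (⊤ : V') := le_top.lt_of_ne (by rintro rfl; exact hx htop)
    set D : Set V' := {c | c ∈ s ∧ c < x} with hD
    set U : Set V' := {c | c ∈ s ∧ x < c} with hU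
    have hbotD : (⊥ : V') ∈ D := ⟨hbot, hbotx⟩
    have htopU : (⊤ : V') ∈ U := ⟨htop, hxtop⟩
    have hjoin : ∀ c ∈ D, ∀ d ∈ D, ∃ e ∈ D, c ≤ e ∧ d ≤ e := by
      intro c hc d hd
      obtain ⟨w, hw⟩ := (hlattice c d).1
      have hws : w ∈ s := (hsub c hc.1 d hd.1).1 w hw
      have hwx : w ≤ x := hw.2 ((hub c d x).mpr ⟨hc.2.le, hd.2.le⟩)
      have hwltx : w < x := hwx.lt_of_ne (fun h => hx (h ▸ hws))
      exact ⟨w, ⟨hws, hwltx⟩, ((hub c d w).mp hw.1).1, ((hub c d w).mp hw.1).2⟩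
    have hmeet : ∀ c ∈ U, ∀ d ∈ U, ∃ e ∈ U, e ≤ c ∧ e ≤ d := by
      intro c hc d hd
      obtain ⟨w, hw⟩ := (hlattice c d).2
      have hws : w ∈ s := (hsub c hc.1 d hd.1).2 w hw
      have hwx : x ≤ w := hw.2 ((hlb c d x).mpr ⟨hc.2.le, hd.2.le⟩)
      have hwltx : x < w := hwx.lt_of_ne (fun h => hx (h ▸ hws))
      exact ⟨w, ⟨hws, hwltx⟩, ((hlb c d w).mp hw.1).1, ((hlb c d w).mp hw.1).2⟩
    -- greatest element of D
    obtain ⟨m, ⟨a, haD, hla⟩, hmax⟩ :=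
      Int.exists_greatest_of_bdd (P := fun z => ∃ c ∈ D, G.layer c = z)
        ⟨(N : ℤ) + 1, fun z hz => by
          obtain ⟨c, -, rfl⟩ := hz
          exact (G.layer_bounds c).2⟩
        ⟨G.layer ⊥, ⊥, hbotD, rfl⟩
    have haMax : ∀ c ∈ D, c ≤ a := by
      intro c hc
      obtain ⟨e, heD, hae, hce⟩ := hjoin a haD c hc
      have hle : G.layer e ≤ m := hmax _ ⟨e, heD, rfl⟩
      have hea : e = a := by
        rcases hae.lt_or_eq with h | h
        · exact absurd (G.layer_strictMono a e h) (by rw [hla]; exact not_lt_of_ge hle)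
        · exact h.symm
      exact hea ▸ hce
    -- least element of U
    obtain ⟨m', ⟨b, hbU, hlb'⟩, hmin⟩ :=
      Int.exists_least_of_bdd (P := fun z => ∃ c ∈ U, G.layer c = z)
        ⟨-1, fun z hz => by
          obtain ⟨c, -, rfl⟩ := hz
          exact (G.layer_bounds c).1⟩
        ⟨G.layer ⊤, ⊤, htopU, rfl⟩
    have hbMin : ∀ c ∈ U, b ≤ c := by
      intro c hc
      obtain ⟨e, heU, hbe, hce⟩ := hmeet b hbU c hc
      have hge : m' ≤ G.layer e := hmin _ ⟨e, heU, rfl⟩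
      have heb : e = b := by
        rcases hbe.lt_or_eq with h | h
        · exact absurd (G.layer_strictMono e b h) (by rw [hlb']; exact not_lt_of_ge hge)
        · exact h
      exact heb ▸ hce
    refine ⟨a, haD.1, b, hbU.1, haD.2, hbU.2,
      G.layer_strictMono a x haD.2, G.layer_strictMono x b hbU.2, ?_⟩
    intro c hc
    constructor
    · constructor
      · intro h; exact haMax c ⟨hc, h⟩
      · intro h; exact h.trans_lt haD.2
    · constructor
      · intro h; exact hbMin c ⟨hc, h⟩
      · intro h; exact hbU.2.trans_le h
end

section
/- Let A and C be lattices which are N-geometries with common subset B = A ∩ C, on which their orders agree, and assume B is closed in A and closed in C. Then the free amalgam A⊗_B C is a lattice in which A and C are closed subsets. If furthermore A and C are simply connected, then so is A⊗_B C. -/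
variable {W : Type*} [PartialOrder W] [BoundedOrder W]

/-- `A` is a *lattice* with the induced order: any two elements of `A` have a least
upper bound and a greatest lower bound within `A`. -/
def LatticeOn (A : Set W) : Prop :=
  ∀ a ∈ A, ∀ b ∈ A,
    (∃ u ∈ A, a ≤ u ∧ b ≤ u ∧ ∀ w ∈ A, a ≤ w → b ≤ w → u ≤ w) ∧
    (∃ l ∈ A, l ≤ a ∧ l ≤ b ∧ ∀ w ∈ A, w ≤ a → w ≤ b → w ≤ l)

/-- A *zigzag in `A`* of length `n`: a sequence of elements of `A` whose consecutive
terms are strictly comparable and in which every interior term is the infimum (sink)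
or the supremum (peak), computed within `A`, of its two neighbours. -/
def IsZigzagIn (A : Set W) (x : ℕ → W) (n : ℕ) : Prop :=
  (∀ i ≤ n, x i ∈ A) ∧
  (∀ i < n, x i < x (i + 1) ∨ x (i + 1) < x i) ∧
  ∀ i, i + 2 ≤ n →
    (x (i + 1) < x i ∧ x (i + 1) < x (i + 2) ∧
      ∀ y ∈ A, y ≤ x i → y ≤ x (i + 2) → y ≤ x (i + 1)) ∨
    (x i < x (i + 1) ∧ x (i + 2) < x (i + 1) ∧
      ∀ y ∈ A, x i ≤ y → x (i + 2) ≤ y → x (i + 1) ≤ y)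

/-- A *zigzag cycle in `A`* of length `2 * n`: a `2 * n`-periodic sequence in `A`
satisfying the zigzag condition (relative to `A`) at every index. -/
def IsZigzagCycleIn (A : Set W) (x : ℕ → W) (n : ℕ) : Prop :=
  0 < n ∧ (∀ i, x (i + 2 * n) = x i) ∧ (∀ i, x i ∈ A) ∧
  ∀ i,
    (x (i + 1) < x i ∧ x (i + 1) < x (i + 2) ∧
      ∀ y ∈ A, y ≤ x i → y ≤ x (i + 2) → y ≤ x (i + 1)) ∨
    (x i < x (i + 1) ∧ x (i + 2) < x (i + 1) ∧
      ∀ y ∈ A, x i ≤ y → x (i + 2) ≤ y → x (i + 1) ≤ y)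

/-- `A` is *simply connected* (relative to the induced order) if it contains no
zigzag cycles. -/
def SimplyConnectedIn (A : Set W) : Prop :=
  ∀ (x : ℕ → W) (n : ℕ), ¬IsZigzagCycleIn A x n

/-- `B` is a *closed* subset of `A`: it contains `⊥` and `⊤` and every zigzag in `A`
with both endpoints in `B` lies entirely in `B`. -/
def ZClosedIn (A B : Set W) : Prop :=
  B ⊆ A ∧ ⊥ ∈ B ∧ ⊤ ∈ B ∧
  ∀ (x : ℕ → W) (n : ℕ), IsZigzagIn A x n → x 0 ∈ B → x n ∈ B → ∀ i ≤ n, x i ∈ B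

section AuxLemmas

variable {W : Type*} [PartialOrder W] [BoundedOrder W] {A C B : Set W}

lemma supB_mem (hAlat : LatticeOn A) (hClat : LatticeOn C)
    (hBA : ZClosedIn A B) (hBC : ZClosedIn C B)
    {b₁ b₂ : W} (h₁ : b₁ ∈ B) (h₂ : b₂ ∈ B) :
    ∃ s ∈ B, b₁ ≤ s ∧ b₂ ≤ s ∧ (∀ w ∈ A, b₁ ≤ w → b₂ ≤ w → s ≤ w) ∧
      (∀ w ∈ C, b₁ ≤ w → b₂ ≤ w → s ≤ w) := by
  obtain ⟨u, huA, hu₁, hu₂, humin⟩ := (hAlat b₁ (hBA.1 h₁) b₂ (hBA.1 h₂)).1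
  obtain ⟨u', hu'C, hu'₁, hu'₂, hu'min⟩ := (hClat b₁ (hBC.1 h₁) b₂ (hBC.1 h₂)).1
  have huB : u ∈ B := by
    rcases eq_or_lt_of_le hu₁ with h | hlt₁
    · rwa [← h]
    rcases eq_or_lt_of_le hu₂ with h | hlt₂
    · rwa [← h]
    set z : ℕ → W := fun t => if t = 0 then b₁ else if t = 1 then u else b₂ with hz
    have hzig : IsZigzagIn A z 2 := by
      refine ⟨?_, ?_, ?_⟩
      · intro t ht
        interval_cases t <;> simp [hz]
        exacts [hBA.1 h₁, huA, hBA.1 h₂]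
      · intro t ht
        interval_cases t
        · left; simpa [hz] using hlt₁
        · right; simpa [hz] using hlt₂
      · intro t ht
        have ht0 : t = 0 := by omega
        subst ht0
        right
        refine ⟨by simpa [hz] using hlt₁, by simpa [hz] using hlt₂, ?_⟩
        intro y hy h1 h2
        simp only [hz] at h1 h2 ⊢
        simp at h1 h2 ⊢
        exact humin y hy h1 h2
    have := hBA.2.2.2 z 2 hzig (by simpa [hz] using h₁) (by simpa [hz] using h₂) 1 (by norm_num)
    simpa [hz] using this
  have hu'B : u' ∈ B := by
    rcases eq_or_lt_of_le hu'₁ with h | hlt₁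
    · rwa [← h]
    rcases eq_or_lt_of_le hu'₂ with h | hlt₂
    · rwa [← h]
    set z : ℕ → W := fun t => if t = 0 then b₁ else if t = 1 then u' else b₂ with hz
    have hzig : IsZigzagIn C z 2 := by
      refine ⟨?_, ?_, ?_⟩
      · intro t ht
        interval_cases t <;> simp [hz]
        exacts [hBC.1 h₁, hu'C, hBC.1 h₂]
      · intro t ht
        interval_cases t
        · left; simpa [hz] using hlt₁
        · right; simpa [hz] using hlt₂
      · intro t ht
        have ht0 : t = 0 := by omega
        subst ht0
        right
        refine ⟨by simpa [hz] using hlt₁, by simpa [hz] using hlt₂, ?_⟩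
        intro y hy h1 h2
        simp only [hz] at h1 h2 ⊢
        simp at h1 h2 ⊢
        exact hu'min y hy h1 h2
    have := hBC.2.2.2 z 2 hzig (by simpa [hz] using h₁) (by simpa [hz] using h₂) 1 (by norm_num)
    simpa [hz] using this
  have heq : u = u' := le_antisymm (humin u' (hBA.1 hu'B) hu'₁ hu'₂)
    (hu'min u (hBC.1 huB) hu₁ hu₂)
  refine ⟨u, huB, hu₁, hu₂, humin, ?_⟩
  rw [heq]; exact hu'min

end AuxLemmas
section AuxLemmas2

variable {W : Type*} [PartialOrder W] [BoundedOrder W] {A C B : Set W}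

lemma infB_mem (hAlat : LatticeOn A) (hClat : LatticeOn C)
    (hBA : ZClosedIn A B) (hBC : ZClosedIn C B)
    {b₁ b₂ : W} (h₁ : b₁ ∈ B) (h₂ : b₂ ∈ B) :
    ∃ s ∈ B, s ≤ b₁ ∧ s ≤ b₂ ∧ (∀ w ∈ A, w ≤ b₁ → w ≤ b₂ → w ≤ s) ∧
      (∀ w ∈ C, w ≤ b₁ → w ≤ b₂ → w ≤ s) := by
  obtain ⟨u, huA, hu₁, hu₂, humin⟩ := (hAlat b₁ (hBA.1 h₁) b₂ (hBA.1 h₂)).2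
  obtain ⟨u', hu'C, hu'₁, hu'₂, hu'min⟩ := (hClat b₁ (hBC.1 h₁) b₂ (hBC.1 h₂)).2
  have huB : u ∈ B := by
    rcases eq_or_lt_of_le hu₁ with h | hlt₁
    · rwa [h]
    rcases eq_or_lt_of_le hu₂ with h | hlt₂
    · rwa [h]
    set z : ℕ → W := fun t => if t = 0 then b₁ else if t = 1 then u else b₂ with hz
    have hzig : IsZigzagIn A z 2 := by
      refine ⟨?_, ?_, ?_⟩
      · intro t ht
        interval_cases t <;> simp [hz]
        exacts [hBA.1 h₁, huA, hBA.1 h₂]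
      · intro t ht
        interval_cases t
        · right; simpa [hz] using hlt₁
        · left; simpa [hz] using hlt₂
      · intro t ht
        have ht0 : t = 0 := by omega
        subst ht0
        left
        refine ⟨by simpa [hz] using hlt₁, by simpa [hz] using hlt₂, ?_⟩
        intro y hy h1 h2
        simp only [hz] at h1 h2 ⊢
        simp at h1 h2 ⊢
        exact humin y hy h1 h2
    have := hBA.2.2.2 z 2 hzig (by simpa [hz] using h₁) (by simpa [hz] using h₂) 1 (by norm_num)
    simpa [hz] using this
  have hu'B : u' ∈ B := by
    rcases eq_or_lt_of_le hu'₁ with h | hlt₁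
    · rwa [h]
    rcases eq_or_lt_of_le hu'₂ with h | hlt₂
    · rwa [h]
    set z : ℕ → W := fun t => if t = 0 then b₁ else if t = 1 then u' else b₂ with hz
    have hzig : IsZigzagIn C z 2 := by
      refine ⟨?_, ?_, ?_⟩
      · intro t ht
        interval_cases t <;> simp [hz]
        exacts [hBC.1 h₁, hu'C, hBC.1 h₂]
      · intro t ht
        interval_cases t
        · right; simpa [hz] using hlt₁
        · left; simpa [hz] using hlt₂
      · intro t ht
        have ht0 : t = 0 := by omega
        subst ht0
        left
        refine ⟨by simpa [hz] using hlt₁, by simpa [hz] using hlt₂, ?_⟩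
        intro y hy h1 h2
        simp only [hz] at h1 h2 ⊢
        simp at h1 h2 ⊢
        exact hu'min y hy h1 h2
    have := hBC.2.2.2 z 2 hzig (by simpa [hz] using h₁) (by simpa [hz] using h₂) 1 (by norm_num)
    simpa [hz] using this
  have heq : u = u' := le_antisymm (hu'min u (hBC.1 huB) hu₁ hu₂)
    (humin u' (hBA.1 hu'B) hu'₁ hu'₂)
  refine ⟨u, huB, hu₁, hu₂, humin, ?_⟩
  rw [heq]; exact hu'min

end AuxLemmas2
section AuxLemmas3

variable {W : Type*} [PartialOrder W] [BoundedOrder W] {A C B : Set W} {N : ℕ}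

lemma betaMin (G : NGeometry N W) (hunion : A ∪ C = Set.univ)
    (htopB : ⊤ ∈ B)
    (hAlat : LatticeOn A) (hClat : LatticeOn C)
    (hBA : ZClosedIn A B) (hBC : ZClosedIn C B) (v : W) :
    ∃ m ∈ B, v ≤ m ∧ ∀ b ∈ B, v ≤ b → m ≤ b := by
  classical
  have hex : ∃ n : ℕ, ∃ b ∈ B, v ≤ b ∧ (G.layer b + 1).toNat = n :=
    ⟨_, ⊤, htopB, le_top, rfl⟩
  obtain ⟨m, hmB, hvm, hm⟩ := Nat.find_spec hex
  refine ⟨m, hmB, hvm, ?_⟩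
  intro b hbB hvb
  obtain ⟨t, htB, htm, htb, hminA, hminC⟩ := infB_mem hAlat hClat hBA hBC hmB hbB
  have hvt : v ≤ t := by
    have hv : v ∈ A ∪ C := by rw [hunion]; trivial
    rcases hv with hv | hv
    · exact hminA v hv hvm hvb
    · exact hminC v hv hvm hvb
  have hte : t = m := by
    by_contra hne
    have hlt : t < m := lt_of_le_of_ne htm hne
    have h1 := G.layer_strictMono t m hlt
    have h2 := (G.layer_bounds t).1
    have h3 : Nat.find hex ≤ (G.layer t + 1).toNat :=
      Nat.find_min' hex ⟨t, htB, hvt, rfl⟩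
    omega
  rw [← hte]; exact htb

lemma alphaMax (G : NGeometry N W) (hunion : A ∪ C = Set.univ)
    (hbotB : ⊥ ∈ B)
    (hAlat : LatticeOn A) (hClat : LatticeOn C)
    (hBA : ZClosedIn A B) (hBC : ZClosedIn C B) (v : W) :
    ∃ m ∈ B, m ≤ v ∧ ∀ b ∈ B, b ≤ v → b ≤ m := by
  classical
  have hex : ∃ n : ℕ, ∃ b ∈ B, b ≤ v ∧ ((N : ℤ) + 1 - G.layer b).toNat = n :=
    ⟨_, ⊥, hbotB, bot_le, rfl⟩
  obtain ⟨m, hmB, hvm, hm⟩ := Nat.find_spec hex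
  refine ⟨m, hmB, hvm, ?_⟩
  intro b hbB hvb
  obtain ⟨t, htB, htm, htb, hminA, hminC⟩ := supB_mem hAlat hClat hBA hBC hmB hbB
  have hvt : t ≤ v := by
    have hv : v ∈ A ∪ C := by rw [hunion]; trivial
    rcases hv with hv | hv
    · exact hminA v hv hvm hvb
    · exact hminC v hv hvm hvb
  have hte : t = m := by
    by_contra hne
    have hlt : m < t := lt_of_le_of_ne htm (fun h => hne h.symm)
    have h1 := G.layer_strictMono m t hlt
    have h2 := (G.layer_bounds t).2
    have h3 : Nat.find hex ≤ ((N : ℤ) + 1 - G.layer t).toNat :=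
      Nat.find_min' hex ⟨t, htB, hvt, rfl⟩
    omega
  rw [← hte]; exact htb

end AuxLemmas3
section AuxLemmas4

variable {W : Type*} [PartialOrder W] [BoundedOrder W] {A C B : Set W} {N : ℕ}

lemma supCross (G : NGeometry N W) (hunion : A ∪ C = Set.univ) (hB : B = A ∩ C)
    (htop : ⊤ ∈ B) (hAlat : LatticeOn A) (hClat : LatticeOn C)
    (hfree : ∀ a ∈ A, ∀ c ∈ C,
      (a ≤ c → ∃ b ∈ B, a ≤ b ∧ b ≤ c) ∧ (c ≤ a → ∃ b ∈ B, c ≤ b ∧ b ≤ a))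
    (hBA : ZClosedIn A B) (hBC : ZClosedIn C B)
    {x y : W} (hx : x ∈ A) (hy : y ∈ C) :
    ∃ u, x ≤ u ∧ y ≤ u ∧ ∀ w, x ≤ w → y ≤ w → u ≤ w := by
  classical
  obtain ⟨bx, hbxB, hxbx, hbxmin⟩ := betaMin G hunion htop hAlat hClat hBA hBC x
  obtain ⟨bY, hbYB, hybY, hbYmin⟩ := betaMin G hunion htop hAlat hClat hBA hBC y
  obtain ⟨uA, huAA, hxuA, hbYuA, huAmin⟩ := (hAlat x hx bY (hBA.1 hbYB)).1
  obtain ⟨uC, huCC, hbxuC, hyuC, huCmin⟩ := (hClat bx (hBC.1 hbxB) y hy).1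
  have hmemw : ∀ w : W, w ∈ A ∪ C := by intro w; rw [hunion]; trivial
  by_cases huAB : uA ∈ B
  · refine ⟨uC, le_trans hxbx hbxuC, hyuC, ?_⟩
    intro w hxw hyw
    rcases hmemw w with hwA | hwC
    · obtain ⟨b, hbB, hyb, hbw⟩ := (hfree w hwA y hy).2 hyw
      have huAw : uA ≤ w := huAmin w hwA hxw (le_trans (hbYmin b hbB hyb) hbw)
      have huCuA : uC ≤ uA :=
        huCmin uA (hBC.1 huAB) (hbxmin uA huAB hxuA) (le_trans hybY hbYuA)
      exact le_trans huCuA huAw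
    · obtain ⟨b, hbB, hxb, hbw⟩ := (hfree x hx w hwC).1 hxw
      exact huCmin w hwC (le_trans (hbxmin b hbB hxb) hbw) hyw
  by_cases huCB : uC ∈ B
  · refine ⟨uA, hxuA, le_trans hybY hbYuA, ?_⟩
    intro w hxw hyw
    rcases hmemw w with hwA | hwC
    · obtain ⟨b, hbB, hyb, hbw⟩ := (hfree w hwA y hy).2 hyw
      exact huAmin w hwA hxw (le_trans (hbYmin b hbB hyb) hbw)
    · obtain ⟨b, hbB, hxb, hbw⟩ := (hfree x hx w hwC).1 hxw
      have huCw : uC ≤ w := huCmin w hwC (le_trans (hbxmin b hbB hxb) hbw) hyw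
      have huAuC : uA ≤ uC :=
        huAmin uC (hBA.1 huCB) (le_trans hxbx hbxuC) (hbYmin uC huCB hyuC)
      exact le_trans huAuC huCw
  exfalso
  obtain ⟨d, hdB, hbxd, hbYd, hdminA, hdminC⟩ := supB_mem hAlat hClat hBA hBC hbxB hbYB
  have huAd : uA ≤ d := huAmin d (hBA.1 hdB) (le_trans hxbx hbxd) hbYd
  have huCd : uC ≤ d := huCmin d (hBC.1 hdB) hbxd (le_trans hybY hbYd)
  by_cases hcase : uA ≤ bx
  · by_cases hcase2 : uC ≤ bY
    · have h1 : uA ≤ uC := le_trans hcase hbxuC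
      have h2 : uC ≤ uA := le_trans hcase2 hbYuA
      have heq : uA = uC := le_antisymm h1 h2
      exact huAB (hB ▸ ⟨huAA, heq ▸ huCC⟩)
    · obtain ⟨y', hy'C, hy'bY, hy'uC, hy'max⟩ := (hClat bY (hBC.1 hbYB) uC huCC).2
      have hyy' : y ≤ y' := hy'max y hy hybY hyuC
      have hne1 : y' ≠ bY := by
        intro h
        have hbYuC : bY ≤ uC := h ▸ hy'uC
        have : d ≤ uC := hdminC uC huCC hbxuC hbYuC
        exact huCB (le_antisymm huCd this ▸ hdB)
      have hne2 : y' ≠ uC := fun h => hcase2 (h ▸ hy'bY)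
      have hne3 : bx ≠ uC := fun h => huCB (h ▸ hbxB)
      set z : ℕ → W := fun t => if t = 0 then bY else if t = 1 then y' else
        if t = 2 then uC else bx with hz
      have hzig : IsZigzagIn C z 3 := by
        refine ⟨?_, ?_, ?_⟩
        · intro t ht
          interval_cases t <;> simp [hz]
          exacts [hBC.1 hbYB, hy'C, huCC, hBC.1 hbxB]
        · intro t ht
          interval_cases t
          · right; simp [hz]; exact lt_of_le_of_ne hy'bY hne1
          · left; simp [hz]; exact lt_of_le_of_ne hy'uC hne2
          · right; simp [hz]; exact lt_of_le_of_ne hbxuC hne3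
        · intro t ht
          have ht' : t = 0 ∨ t = 1 := by omega
          rcases ht' with rfl | rfl
          · left
            refine ⟨by simp [hz]; exact lt_of_le_of_ne hy'bY hne1,
              by simp [hz]; exact lt_of_le_of_ne hy'uC hne2, ?_⟩
            intro w hwC h1 h2
            simp only [hz] at h1 h2 ⊢
            simp at h1 h2 ⊢
            exact hy'max w hwC h1 h2
          · right
            refine ⟨by simp [hz]; exact lt_of_le_of_ne hy'uC hne2,
              by simp [hz]; exact lt_of_le_of_ne hbxuC hne3, ?_⟩
            intro w hwC h1 h2
            simp only [hz] at h1 h2 ⊢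
            simp at h1 h2 ⊢
            exact huCmin w hwC h2 (le_trans hyy' h1)
      have := hBC.2.2.2 z 3 hzig (by simpa [hz] using hbYB) (by simpa [hz] using hbxB)
        2 (by norm_num)
      exact huCB (by simpa [hz] using this)
  · obtain ⟨x', hx'A, hx'bx, hx'uA, hx'max⟩ := (hAlat bx (hBA.1 hbxB) uA huAA).2
    have hxx' : x ≤ x' := hx'max x hx hxbx hxuA
    have hne1 : x' ≠ bx := by
      intro h
      have hbxuA : bx ≤ uA := h ▸ hx'uA
      have : d ≤ uA := hdminA uA huAA hbxuA hbYuA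
      exact huAB (le_antisymm huAd this ▸ hdB)
    have hne2 : x' ≠ uA := fun h => hcase (h ▸ hx'bx)
    have hne3 : bY ≠ uA := fun h => huAB (h ▸ hbYB)
    set z : ℕ → W := fun t => if t = 0 then bx else if t = 1 then x' else
      if t = 2 then uA else bY with hz
    have hzig : IsZigzagIn A z 3 := by
      refine ⟨?_, ?_, ?_⟩
      · intro t ht
        interval_cases t <;> simp [hz]
        exacts [hBA.1 hbxB, hx'A, huAA, hBA.1 hbYB]
      · intro t ht
        interval_cases t
        · right; simp [hz]; exact lt_of_le_of_ne hx'bx hne1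
        · left; simp [hz]; exact lt_of_le_of_ne hx'uA hne2
        · right; simp [hz]; exact lt_of_le_of_ne hbYuA hne3
      · intro t ht
        have ht' : t = 0 ∨ t = 1 := by omega
        rcases ht' with rfl | rfl
        · left
          refine ⟨by simp [hz]; exact lt_of_le_of_ne hx'bx hne1,
            by simp [hz]; exact lt_of_le_of_ne hx'uA hne2, ?_⟩
          intro w hwA h1 h2
          simp only [hz] at h1 h2 ⊢
          simp at h1 h2 ⊢
          exact hx'max w hwA h1 h2
        · right
          refine ⟨by simp [hz]; exact lt_of_le_of_ne hx'uA hne2,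
            by simp [hz]; exact lt_of_le_of_ne hbYuA hne3, ?_⟩
          intro w hwA h1 h2
          simp only [hz] at h1 h2 ⊢
          simp at h1 h2 ⊢
          exact huAmin w hwA (le_trans hxx' h1) h2
    have := hBA.2.2.2 z 3 hzig (by simpa [hz] using hbxB) (by simpa [hz] using hbYB)
      2 (by norm_num)
    exact huAB (by simpa [hz] using this)

end AuxLemmas4
section AuxLemmas5

variable {W : Type*} [PartialOrder W] [BoundedOrder W] {A C B : Set W} {N : ℕ}

lemma infCross (G : NGeometry N W) (hunion : A ∪ C = Set.univ) (hB : B = A ∩ C)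
    (hbot : ⊥ ∈ B) (hAlat : LatticeOn A) (hClat : LatticeOn C)
    (hfree : ∀ a ∈ A, ∀ c ∈ C,
      (a ≤ c → ∃ b ∈ B, a ≤ b ∧ b ≤ c) ∧ (c ≤ a → ∃ b ∈ B, c ≤ b ∧ b ≤ a))
    (hBA : ZClosedIn A B) (hBC : ZClosedIn C B)
    {x y : W} (hx : x ∈ A) (hy : y ∈ C) :
    ∃ u, u ≤ x ∧ u ≤ y ∧ ∀ w, w ≤ x → w ≤ y → w ≤ u := by
  classical
  obtain ⟨ax, haxB, hxax, haxmax⟩ := alphaMax G hunion hbot hAlat hClat hBA hBC x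
  obtain ⟨aY, haYB, hyaY, haYmax⟩ := alphaMax G hunion hbot hAlat hClat hBA hBC y
  obtain ⟨lA, hlAA, hlAx, hlAaY, hlAmax⟩ := (hAlat x hx aY (hBA.1 haYB)).2
  obtain ⟨lC, hlCC, hlCax, hlCy, hlCmax⟩ := (hClat ax (hBC.1 haxB) y hy).2
  have hmemw : ∀ w : W, w ∈ A ∪ C := by intro w; rw [hunion]; trivial
  by_cases hlAB : lA ∈ B
  · refine ⟨lC, le_trans hlCax hxax, hlCy, ?_⟩
    intro w hxw hyw
    rcases hmemw w with hwA | hwC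
    · obtain ⟨b, hbB, hwb, hby⟩ := (hfree w hwA y hy).1 hyw
      have hlAw : w ≤ lA := hlAmax w hwA hxw (le_trans hwb (haYmax b hbB hby))
      have hlCuA : lA ≤ lC :=
        hlCmax lA (hBC.1 hlAB) (haxmax lA hlAB hlAx) (le_trans hlAaY hyaY)
      exact le_trans hlAw hlCuA
    · obtain ⟨b, hbB, hwb, hbx⟩ := (hfree x hx w hwC).2 hxw
      exact hlCmax w hwC (le_trans hwb (haxmax b hbB hbx)) hyw
  by_cases hlCB : lC ∈ B
  · refine ⟨lA, hlAx, le_trans hlAaY hyaY, ?_⟩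
    intro w hxw hyw
    rcases hmemw w with hwA | hwC
    · obtain ⟨b, hbB, hwb, hby⟩ := (hfree w hwA y hy).1 hyw
      exact hlAmax w hwA hxw (le_trans hwb (haYmax b hbB hby))
    · obtain ⟨b, hbB, hwb, hbx⟩ := (hfree x hx w hwC).2 hxw
      have hlCw : w ≤ lC := hlCmax w hwC (le_trans hwb (haxmax b hbB hbx)) hyw
      have hlClA : lC ≤ lA :=
        hlAmax lC (hBA.1 hlCB) (le_trans hlCax hxax) (haYmax lC hlCB hlCy)
      exact le_trans hlCw hlClA
  exfalso
  obtain ⟨d, hdB, hdax, hdaY, hdmaxA, hdmaxC⟩ := infB_mem hAlat hClat hBA hBC haxB haYB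
  have hdlA : d ≤ lA := hlAmax d (hBA.1 hdB) (le_trans hdax hxax) hdaY
  have hdlC : d ≤ lC := hlCmax d (hBC.1 hdB) hdax (le_trans hdaY hyaY)
  by_cases hcase : ax ≤ lA
  · by_cases hcase2 : aY ≤ lC
    · have h1 : lC ≤ lA := le_trans hlCax hcase
      have h2 : lA ≤ lC := le_trans hlAaY hcase2
      have heq : lA = lC := le_antisymm h2 h1
      exact hlAB (hB ▸ ⟨hlAA, heq ▸ hlCC⟩)
    · obtain ⟨y', hy'C, haYy', hlCy', hy'min⟩ := (hClat aY (hBC.1 haYB) lC hlCC).1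
      have hyy' : y' ≤ y := hy'min y hy hyaY hlCy
      have hne1 : y' ≠ aY := by
        intro h
        have hlCaY : lC ≤ aY := h ▸ hlCy'
        have : lC ≤ d := hdmaxC lC hlCC hlCax hlCaY
        exact hlCB (le_antisymm this hdlC ▸ hdB)
      have hne2 : y' ≠ lC := fun h => hcase2 (h ▸ haYy')
      have hne3 : ax ≠ lC := fun h => hlCB (h ▸ haxB)
      set z : ℕ → W := fun t => if t = 0 then aY else if t = 1 then y' else
        if t = 2 then lC else ax with hz
      have hzig : IsZigzagIn C z 3 := by
        refine ⟨?_, ?_, ?_⟩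
        · intro t ht
          interval_cases t <;> simp [hz]
          exacts [hBC.1 haYB, hy'C, hlCC, hBC.1 haxB]
        · intro t ht
          interval_cases t
          · left; simp [hz]; exact lt_of_le_of_ne haYy' (fun h => hne1 h.symm)
          · right; simp [hz]; exact lt_of_le_of_ne hlCy' (fun h => hne2 h.symm)
          · left; simp [hz]; exact lt_of_le_of_ne hlCax (fun h => hne3 h.symm)
        · intro t ht
          have ht' : t = 0 ∨ t = 1 := by omega
          rcases ht' with rfl | rfl
          · right
            refine ⟨by simp [hz]; exact lt_of_le_of_ne haYy' (fun h => hne1 h.symm),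
              by simp [hz]; exact lt_of_le_of_ne hlCy' (fun h => hne2 h.symm), ?_⟩
            intro w hwC h1 h2
            simp only [hz] at h1 h2 ⊢
            simp at h1 h2 ⊢
            exact hy'min w hwC h1 h2
          · left
            refine ⟨by simp [hz]; exact lt_of_le_of_ne hlCy' (fun h => hne2 h.symm),
              by simp [hz]; exact lt_of_le_of_ne hlCax (fun h => hne3 h.symm), ?_⟩
            intro w hwC h1 h2
            simp only [hz] at h1 h2 ⊢
            simp at h1 h2 ⊢
            exact hlCmax w hwC h2 (le_trans h1 hyy')
      have := hBC.2.2.2 z 3 hzig (by simpa [hz] using haYB) (by simpa [hz] using haxB)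
        2 (by norm_num)
      exact hlCB (by simpa [hz] using this)
  · obtain ⟨x', hx'A, haxx', hlAx', hx'min⟩ := (hAlat ax (hBA.1 haxB) lA hlAA).1
    have hxx' : x' ≤ x := hx'min x hx hxax hlAx
    have hne1 : x' ≠ ax := by
      intro h
      have hlAax : lA ≤ ax := h ▸ hlAx'
      have : lA ≤ d := hdmaxA lA hlAA hlAax hlAaY
      exact hlAB (le_antisymm this hdlA ▸ hdB)
    have hne2 : x' ≠ lA := fun h => hcase (h ▸ haxx')
    have hne3 : aY ≠ lA := fun h => hlAB (h ▸ haYB)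
    set z : ℕ → W := fun t => if t = 0 then ax else if t = 1 then x' else
      if t = 2 then lA else aY with hz
    have hzig : IsZigzagIn A z 3 := by
      refine ⟨?_, ?_, ?_⟩
      · intro t ht
        interval_cases t <;> simp [hz]
        exacts [hBA.1 haxB, hx'A, hlAA, hBA.1 haYB]
      · intro t ht
        interval_cases t
        · left; simp [hz]; exact lt_of_le_of_ne haxx' (fun h => hne1 h.symm)
        · right; simp [hz]; exact lt_of_le_of_ne hlAx' (fun h => hne2 h.symm)
        · left; simp [hz]; exact lt_of_le_of_ne hlAaY (fun h => hne3 h.symm)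
      · intro t ht
        have ht' : t = 0 ∨ t = 1 := by omega
        rcases ht' with rfl | rfl
        · right
          refine ⟨by simp [hz]; exact lt_of_le_of_ne haxx' (fun h => hne1 h.symm),
            by simp [hz]; exact lt_of_le_of_ne hlAx' (fun h => hne2 h.symm), ?_⟩
          intro w hwA h1 h2
          simp only [hz] at h1 h2 ⊢
          simp at h1 h2 ⊢
          exact hx'min w hwA h1 h2
        · left
          refine ⟨by simp [hz]; exact lt_of_le_of_ne hlAx' (fun h => hne2 h.symm),
            by simp [hz]; exact lt_of_le_of_ne hlAaY (fun h => hne3 h.symm), ?_⟩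
          intro w hwA h1 h2
          simp only [hz] at h1 h2 ⊢
          simp at h1 h2 ⊢
          exact hlAmax w hwA (le_trans h1 hxx') h2
    have := hBA.2.2.2 z 3 hzig (by simpa [hz] using haxB) (by simpa [hz] using haYB)
      2 (by norm_num)
    exact hlAB (by simpa [hz] using this)

end AuxLemmas5
section AuxLemmas6

variable {W : Type*} [PartialOrder W] [BoundedOrder W] {A C B : Set W}

lemma blockAux (hunion : A ∪ C = Set.univ) (hB : B = A ∩ C)
    (hfree : ∀ a ∈ A, ∀ c ∈ C,
      (a ≤ c → ∃ b ∈ B, a ≤ b ∧ b ≤ c) ∧ (c ≤ a → ∃ b ∈ B, c ≤ b ∧ b ≤ a))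
    (hBC : ZClosedIn C B)
    (x : ℕ → W) (i j : ℕ) (hij : i + 2 ≤ j) (hxi : x i ∈ A) (hxj : x j ∈ A)
    (hint : ∀ t, i < t → t < j → x t ∉ A)
    (hcond : ∀ t, i ≤ t → t + 2 ≤ j →
      ((x (t+1) < x t ∧ x (t+1) < x (t+2) ∧ ∀ y, y ≤ x t → y ≤ x (t+2) → y ≤ x (t+1)) ∨
       (x t < x (t+1) ∧ x (t+2) < x (t+1) ∧ ∀ y, x t ≤ y → x (t+2) ≤ y → x (t+1) ≤ y))) :
    False := by
  classical
  have hmem : ∀ t, x t ∈ A ∪ C := by intro t; rw [hunion]; trivial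
  have hintC : ∀ t, i < t → t < j → x t ∈ C := by
    intro t h1 h2
    rcases hmem t with h | h
    · exact absurd h (hint t h1 h2)
    · exact h
  have hintB : ∀ t, i < t → t < j → x t ∉ B := by
    intro t h1 h2 hb
    exact hint t h1 h2 (hB ▸ hb).1
  -- comparability of the pair (i, i+1)
  have hcompi : x i < x (i+1) ∨ x (i+1) < x i := by
    rcases hcond i le_rfl hij with ⟨h1, _, _⟩ | ⟨h1, _, _⟩
    · right; exact h1
    · left; exact h1
  -- comparability of the pair (j-1, j)
  have hjeq : j - 2 + 1 = j - 1 ∧ j - 2 + 2 = j ∧ i ≤ j - 2 ∧ j - 2 + 2 ≤ j := by omega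
  have hcompj : x (j-1) < x j ∨ x j < x (j-1) := by
    rcases hcond (j-2) hjeq.2.2.1 hjeq.2.2.2 with ⟨_, h2, _⟩ | ⟨_, h2, _⟩
    · left; rw [← hjeq.1, ← hjeq.2.1]; exact h2
    · right; rw [← hjeq.1, ← hjeq.2.1]; exact h2
  have hxi1C : x (i+1) ∈ C := hintC (i+1) (by omega) (by omega)
  have hxj1C : x (j-1) ∈ C := hintC (j-1) (by omega) (by omega)
  -- b₀ between x i and x (i+1)
  obtain ⟨b₀, hb₀B, hb₀⟩ :
      ∃ b ∈ B, (x i < x (i+1) ∧ x i ≤ b ∧ b ≤ x (i+1)) ∨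
        (x (i+1) < x i ∧ x (i+1) ≤ b ∧ b ≤ x i) := by
    rcases hcompi with h | h
    · obtain ⟨b, hbB, h1, h2⟩ := (hfree (x i) hxi (x (i+1)) hxi1C).1 h.le
      exact ⟨b, hbB, Or.inl ⟨h, h1, h2⟩⟩
    · obtain ⟨b, hbB, h1, h2⟩ := (hfree (x i) hxi (x (i+1)) hxi1C).2 h.le
      exact ⟨b, hbB, Or.inr ⟨h, h1, h2⟩⟩
  -- b₁ between x (j-1) and x j
  obtain ⟨b₁, hb₁B, hb₁⟩ :
      ∃ b ∈ B, (x (j-1) < x j ∧ x (j-1) ≤ b ∧ b ≤ x j) ∨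
        (x j < x (j-1) ∧ x j ≤ b ∧ b ≤ x (j-1)) := by
    rcases hcompj with h | h
    · obtain ⟨b, hbB, h1, h2⟩ := (hfree (x j) hxj (x (j-1)) hxj1C).2 h.le
      exact ⟨b, hbB, Or.inl ⟨h, h1, h2⟩⟩
    · obtain ⟨b, hbB, h1, h2⟩ := (hfree (x j) hxj (x (j-1)) hxj1C).1 h.le
      exact ⟨b, hbB, Or.inr ⟨h, h1, h2⟩⟩
  set m := j - i with hm
  have hm2 : 2 ≤ m := by omega
  set y : ℕ → W := fun t => if t = 0 then b₀ else if t = m then b₁ else x (i + t) with hy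
  have hy0 : y 0 = b₀ := by simp [hy]
  have hym : y m = b₁ := by
    have hne : ¬ (m = 0) := by omega
    simp [hy, hne]
  have hymid : ∀ t, 0 < t → t < m → y t = x (i + t) := by
    intro t h1 h2
    simp only [hy]; rw [if_neg (by omega : ¬ t = 0), if_neg (by omega : ¬ t = m)]
  have hy1 : y 1 = x (i+1) := hymid 1 (by omega) (by omega)
  have hzig : IsZigzagIn C y m := by
    refine ⟨?_, ?_, ?_⟩
    · intro t ht
      rcases Nat.eq_zero_or_pos t with rfl | h0
      · rw [hy0]; exact hBC.1 hb₀B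
      rcases eq_or_lt_of_le ht with rfl | hlt
      · rw [hym]; exact hBC.1 hb₁B
      rw [hymid t h0 hlt]
      exact hintC (i+t) (by omega) (by omega)
    · intro t ht
      -- y t vs y (t+1)
      rcases Nat.eq_zero_or_pos t with rfl | h0
      · rw [hy0, hy1]
        rcases hb₀ with ⟨h, h1, h2⟩ | ⟨h, h1, h2⟩
        · left; exact lt_of_le_of_ne h2 (fun he => hintB (i+1) (by omega) (by omega) (he ▸ hb₀B))
        · right; exact lt_of_le_of_ne h1 (fun he => hintB (i+1) (by omega) (by omega) (he.symm ▸ hb₀B))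
      rcases Nat.eq_or_lt_of_le (Nat.succ_le_of_lt ht) with h1m | hlt
      · -- t + 1 = m
        have hytm : y (t+1) = b₁ := by rw [show t + 1 = m by omega]; exact hym
        have hyt : y t = x (j - 1) := by
          rw [hymid t h0 (by omega)]; congr 1; omega
        rw [hyt, hytm]
        rcases hb₁ with ⟨h, h1, h2⟩ | ⟨h, h1, h2⟩
        · left; exact lt_of_le_of_ne h1 (fun he => hintB (j-1) (by omega) (by omega) (he.symm ▸ hb₁B))
        · right; exact lt_of_le_of_ne h2 (fun he => hintB (j-1) (by omega) (by omega) (he ▸ hb₁B))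
      · -- middle
        rw [hymid t h0 (by omega), hymid (t+1) (by omega) hlt]
        have := hcond (i+t) (by omega) (by omega)
        have he : i + (t+1) = (i+t)+1 := by omega
        rw [he]
        rcases this with ⟨h1, _, _⟩ | ⟨h1, _, _⟩
        · right; exact h1
        · left; exact h1
    · intro t ht
      have hyt1 : y (t+1) = x (i+t+1) := by
        have he : i + (t+1) = i + t + 1 := by omega
        rw [hymid (t+1) (by omega) (by omega), he]
      have hc := hcond (i+t) (by omega) (by omega)
      -- left neighbour facts
      have hidx2 : i + t + 2 = i + (t + 2) := by omega
      rcases hc with ⟨h1, h2, h3⟩ | ⟨h1, h2, h3⟩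
      · -- sink at x (i+t+1)
        left
        have hL : y (t+1) < y t ∧ y t ≤ x (i+t) := by
          rcases Nat.eq_zero_or_pos t with rfl | h0
          · rw [hy0, hyt1]
            rcases hb₀ with ⟨h, hh1, hh2⟩ | ⟨h, hh1, hh2⟩
            · exact absurd h (by simpa using lt_asymm h1)
            · exact ⟨lt_of_le_of_ne hh1 (fun he => hintB (i+1) (by omega) (by omega)
                (he.symm ▸ hb₀B)), hh2⟩
          · rw [hymid t h0 (by omega), hyt1]
            exact ⟨h1, le_rfl⟩
        have hR : y (t+1) < y (t+2) ∧ y (t+2) ≤ x (i+(t+2)) := by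
          rcases Nat.eq_or_lt_of_le ht with hm' | hlt
          · -- t + 2 = m
            have hidx : i + (t+2) = j := by omega
            have hidx1 : i + t + 1 = j - 1 := by omega
            have hym2 : y (t+2) = b₁ := by rw [hm']; exact hym
            rw [hym2, hyt1, hidx1, hidx]
            rcases hb₁ with ⟨h, hh1, hh2⟩ | ⟨h, hh1, hh2⟩
            · exact ⟨lt_of_le_of_ne hh1 (fun he => hintB (j-1) (by omega) (by omega)
                (he.symm ▸ hb₁B)), hh2⟩
            · have h2' : x (j - 1) < x j := by
                have e1 : j - 1 = i + t + 1 := hidx1.symm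
                have e2 : j = i + t + 2 := by omega
                rw [e1, e2]; exact h2
              exact absurd h (lt_asymm h2')
          · rw [hymid (t+2) (by omega) hlt, hyt1]
            rw [← hidx2]
            exact ⟨h2, le_rfl⟩
        refine ⟨hL.1, hR.1, ?_⟩
        intro w _ hw1 hw2
        rw [hyt1]
        exact h3 w (le_trans hw1 hL.2) (by rw [hidx2]; exact le_trans hw2 hR.2)
      · -- peak at x (i+t+1)
        right
        have hL : y t < y (t+1) ∧ x (i+t) ≤ y t := by
          rcases Nat.eq_zero_or_pos t with rfl | h0
          · rw [hy0, hyt1]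
            rcases hb₀ with ⟨h, hh1, hh2⟩ | ⟨h, hh1, hh2⟩
            · exact ⟨lt_of_le_of_ne hh2 (fun he => hintB (i+1) (by omega) (by omega)
                (he ▸ hb₀B)), hh1⟩
            · exact absurd h (by simpa using lt_asymm h1)
          · rw [hymid t h0 (by omega), hyt1]
            exact ⟨h1, le_rfl⟩
        have hR : y (t+2) < y (t+1) ∧ x (i+(t+2)) ≤ y (t+2) := by
          rcases Nat.eq_or_lt_of_le ht with hm' | hlt
          · have hidx : i + (t+2) = j := by omega
            have hidx1 : i + t + 1 = j - 1 := by omega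
            have hym2 : y (t+2) = b₁ := by rw [hm']; exact hym
            rw [hym2, hyt1, hidx1, hidx]
            rcases hb₁ with ⟨h, hh1, hh2⟩ | ⟨h, hh1, hh2⟩
            · have h2' : x j < x (j - 1) := by
                have e1 : j - 1 = i + t + 1 := hidx1.symm
                have e2 : j = i + t + 2 := by omega
                rw [e1, e2]; exact h2
              exact absurd h (lt_asymm h2')
            · exact ⟨lt_of_le_of_ne hh2 (fun he => hintB (j-1) (by omega) (by omega)
                (he ▸ hb₁B)), hh1⟩
          · rw [hymid (t+2) (by omega) hlt, hyt1]
            rw [← hidx2]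
            exact ⟨h2, le_rfl⟩
        refine ⟨hL.1, hR.1, ?_⟩
        intro w _ hw1 hw2
        rw [hyt1]
        exact h3 w (le_trans hL.2 hw1) (by rw [hidx2]; exact le_trans hR.2 hw2)
  have hall := hBC.2.2.2 y m hzig (by rw [hy0]; exact hb₀B) (by rw [hym]; exact hb₁B)
  have := hall 1 (by omega)
  rw [hy1] at this
  exact hintB (i+1) (by omega) (by omega) this

end AuxLemmas6
section AuxLemmas7

variable {W : Type*} [PartialOrder W] [BoundedOrder W] {A C B : Set W}

lemma supSame (hunion : A ∪ C = Set.univ)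
    (hAlat : LatticeOn A) (hClat : LatticeOn C)
    (hfree : ∀ a ∈ A, ∀ c ∈ C,
      (a ≤ c → ∃ b ∈ B, a ≤ b ∧ b ≤ c) ∧ (c ≤ a → ∃ b ∈ B, c ≤ b ∧ b ≤ a))
    (hBA : ZClosedIn A B) (hBC : ZClosedIn C B)
    {x y : W} (hx : x ∈ A) (hy : y ∈ A) :
    ∃ u, x ≤ u ∧ y ≤ u ∧ ∀ w, x ≤ w → y ≤ w → u ≤ w := by
  obtain ⟨u, huA, hxu, hyu, humin⟩ := (hAlat x hx y hy).1
  refine ⟨u, hxu, hyu, ?_⟩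
  intro w hxw hyw
  have hw : w ∈ A ∪ C := by rw [hunion]; trivial
  rcases hw with hwA | hwC
  · exact humin w hwA hxw hyw
  · obtain ⟨b₁, hb₁B, hxb₁, hb₁w⟩ := (hfree x hx w hwC).1 hxw
    obtain ⟨b₂, hb₂B, hyb₂, hb₂w⟩ := (hfree y hy w hwC).1 hyw
    obtain ⟨s, hsB, hb₁s, hb₂s, hsminA, hsminC⟩ := supB_mem hAlat hClat hBA hBC hb₁B hb₂B
    have hus : u ≤ s := humin s (hBA.1 hsB) (le_trans hxb₁ hb₁s) (le_trans hyb₂ hb₂s)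
    exact le_trans hus (hsminC w hwC hb₁w hb₂w)

lemma infSame (hunion : A ∪ C = Set.univ)
    (hAlat : LatticeOn A) (hClat : LatticeOn C)
    (hfree : ∀ a ∈ A, ∀ c ∈ C,
      (a ≤ c → ∃ b ∈ B, a ≤ b ∧ b ≤ c) ∧ (c ≤ a → ∃ b ∈ B, c ≤ b ∧ b ≤ a))
    (hBA : ZClosedIn A B) (hBC : ZClosedIn C B)
    {x y : W} (hx : x ∈ A) (hy : y ∈ A) :
    ∃ u, u ≤ x ∧ u ≤ y ∧ ∀ w, w ≤ x → w ≤ y → w ≤ u := by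
  obtain ⟨u, huA, hxu, hyu, humin⟩ := (hAlat x hx y hy).2
  refine ⟨u, hxu, hyu, ?_⟩
  intro w hxw hyw
  have hw : w ∈ A ∪ C := by rw [hunion]; trivial
  rcases hw with hwA | hwC
  · exact humin w hwA hxw hyw
  · obtain ⟨b₁, hb₁B, hwb₁, hb₁x⟩ := (hfree x hx w hwC).2 hxw
    obtain ⟨b₂, hb₂B, hwb₂, hb₂y⟩ := (hfree y hy w hwC).2 hyw
    obtain ⟨s, hsB, hsb₁, hsb₂, hsminA, hsminC⟩ := infB_mem hAlat hClat hBA hBC hb₁B hb₂B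
    have hsu : s ≤ u := humin s (hBA.1 hsB) (le_trans hsb₁ hb₁x) (le_trans hsb₂ hb₂y)
    exact le_trans (hsminC w hwC hwb₁ hwb₂) hsu

lemma closedAux (hunion : A ∪ C = Set.univ) (hB : B = A ∩ C)
    (hfree : ∀ a ∈ A, ∀ c ∈ C,
      (a ≤ c → ∃ b ∈ B, a ≤ b ∧ b ≤ c) ∧ (c ≤ a → ∃ b ∈ B, c ≤ b ∧ b ≤ a))
    (hBC : ZClosedIn C B)
    (x : ℕ → W) (n : ℕ) (hzig : IsZigzagIn (Set.univ : Set W) x n)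
    (h0 : x 0 ∈ A) (hn : x n ∈ A) : ∀ k ≤ n, x k ∈ A := by
  classical
  intro k hk
  by_contra hkA
  have hk0 : k ≠ 0 := fun h => hkA (h ▸ h0)
  have hkn : k ≠ n := fun h => hkA (h ▸ hn)
  set P : ℕ → Prop := fun t => x t ∈ A with hP
  set i := Nat.findGreatest P k with hi
  have hPi : P i := Nat.findGreatest_spec (Nat.zero_le k) h0
  have hik : i ≤ k := Nat.findGreatest_le k
  have hikne : i ≠ k := fun h => hkA (h ▸ hPi)
  have hexd : ∃ d, P (k + d) := ⟨n - k, by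
    have he : k + (n - k) = n := by omega
    rw [hP, he]; exact hn⟩
  set j := k + Nat.find hexd with hj
  have hPj : P j := Nat.find_spec hexd
  have hd0 : Nat.find hexd ≠ 0 := by
    intro h
    apply hkA
    have := Nat.find_spec hexd
    rw [h] at this
    simpa using this
  have hjn : j ≤ n := by
    have : Nat.find hexd ≤ n - k := Nat.find_min' hexd (by
      have he : k + (n - k) = n := by omega
      rw [hP, he]; exact hn)
    omega
  have hint : ∀ t, i < t → t < j → x t ∉ A := by
    intro t h1 h2 hA
    rcases le_or_gt t k with h3 | h3
    · exact Nat.findGreatest_is_greatest h1 h3 hA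
    · have h4 : t - k < Nat.find hexd := by omega
      have := Nat.find_min hexd h4
      apply this
      have he : k + (t - k) = t := by omega
      rw [hP, he]; exact hA
  refine blockAux hunion hB hfree hBC x i j (by omega) hPi hPj hint ?_
  intro t h1 h2
  have := hzig.2.2 t (by omega)
  rcases this with ⟨a, b, c⟩ | ⟨a, b, c⟩
  · exact Or.inl ⟨a, b, fun y h1 h2 => c y trivial h1 h2⟩
  · exact Or.inr ⟨a, b, fun y h1 h2 => c y trivial h1 h2⟩

lemma cycleAux (hunion : A ∪ C = Set.univ) (hB : B = A ∩ C)
    (hfree : ∀ a ∈ A, ∀ c ∈ C,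
      (a ≤ c → ∃ b ∈ B, a ≤ b ∧ b ≤ c) ∧ (c ≤ a → ∃ b ∈ B, c ≤ b ∧ b ≤ a))
    (hBC : ZClosedIn C B)
    (x : ℕ → W) (n : ℕ) (hcyc : IsZigzagCycleIn (Set.univ : Set W) x n)
    (k₀ l₀ : ℕ) (hk₀ : x k₀ ∉ A) (hl₀ : x l₀ ∈ A) : False := by
  classical
  obtain ⟨hn, hper, hmem, hcond⟩ := hcyc
  have hperq : ∀ q t, x (t + 2 * n * q) = x t := by
    intro q
    induction q with
    | zero => intro t; simp
    | succ q ih =>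
      intro t
      have he : t + 2 * n * (q + 1) = t + 2 * n * q + 2 * n := by ring
      rw [he, hper, ih]
  have hmod : ∀ t, x (t % (2 * n)) = x t := by
    intro t
    have h1 := hperq (t / (2 * n)) (t % (2 * n))
    have h2 := Nat.div_add_mod t (2 * n)
    have he : t % (2 * n) + 2 * n * (t / (2 * n)) = t := by omega
    rw [he] at h1
    exact h1.symm
  set k := k₀ % (2 * n) + 2 * n with hkdef
  have hk : x k ∉ A := by rw [hkdef, hper, hmod]; exact hk₀
  set l := l₀ % (2 * n) with hldef
  have hl : x l ∈ A := by rw [hldef, hmod]; exact hl₀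
  have hl2n : l < 2 * n := Nat.mod_lt _ (by omega)
  set P : ℕ → Prop := fun t => x t ∈ A with hP
  set i := Nat.findGreatest P k with hi
  have hPi : P i := Nat.findGreatest_spec (show l ≤ k by omega) hl
  have hik : i ≤ k := Nat.findGreatest_le k
  have hikne : i ≠ k := fun h => hk (h ▸ hPi)
  have hexd : ∃ d, P (k + d) := ⟨l + 4 * n - k, by
    have hk4 : k < 4 * n := by
      have := Nat.mod_lt k₀ (show 0 < 2 * n by omega)
      omega
    have he : k + (l + 4 * n - k) = l + 2 * n * 2 := by omega
    simp only [hP]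
    rw [he, hperq]; exact hl⟩
  set j := k + Nat.find hexd with hj
  have hPj : P j := Nat.find_spec hexd
  have hd0 : Nat.find hexd ≠ 0 := by
    intro h
    apply hk
    have := Nat.find_spec hexd
    rw [h] at this
    simpa using this
  have hint : ∀ t, i < t → t < j → x t ∉ A := by
    intro t h1 h2 hA
    rcases le_or_gt t k with h3 | h3
    · exact Nat.findGreatest_is_greatest h1 h3 hA
    · have h4 : t - k < Nat.find hexd := by omega
      have := Nat.find_min hexd h4
      apply this
      have he : k + (t - k) = t := by omega
      rw [hP, he]; exact hA
  refine blockAux hunion hB hfree hBC x i j (by omega) hPi hPj hint ?_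
  intro t h1 h2
  rcases hcond t with ⟨a, b, c⟩ | ⟨a, b, c⟩
  · exact Or.inl ⟨a, b, fun y h1 h2 => c y trivial h1 h2⟩
  · exact Or.inr ⟨a, b, fun y h1 h2 => c y trivial h1 h2⟩

end AuxLemmas7

/-- (Lemma 4.4) The free amalgam of two `N`-geometry lattices over a common closed
subset:  let `W = A ∪ C` carry an `N`-geometry structure, `B = A ∩ C`, `A` free from
`C` over `B` (in both directions, i.e. `W` is the free amalgam `A ⊗_B C`), `A` and `C`
lattices and `B` closed in `A` and in `C`.  Then `W` is a lattice in which `A` and `C`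
are closed; if moreover `A` and `C` are simply connected, so is `W`. -/
theorem free_amalgam_lattice_closed_simplyConnected {N : ℕ}
    (G : NGeometry N W) (A C : Set W) (hunion : A ∪ C = Set.univ)
    (B : Set W) (hB : B = A ∩ C) (hbot : ⊥ ∈ B) (htop : ⊤ ∈ B)
    (hAlat : LatticeOn A) (hClat : LatticeOn C)
    (hfree : ∀ a ∈ A, ∀ c ∈ C,
      (a ≤ c → ∃ b ∈ B, a ≤ b ∧ b ≤ c) ∧ (c ≤ a → ∃ b ∈ B, c ≤ b ∧ b ≤ a))
    (hBA : ZClosedIn A B) (hBC : ZClosedIn C B) :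
    LatticeOn (Set.univ : Set W) ∧
    ZClosedIn Set.univ A ∧ ZClosedIn Set.univ C ∧
    (SimplyConnectedIn A → SimplyConnectedIn C →
      SimplyConnectedIn (Set.univ : Set W)) := by
  have hunion' : C ∪ A = Set.univ := by rw [Set.union_comm]; exact hunion
  have hB' : B = C ∩ A := by rw [Set.inter_comm]; exact hB
  have hfree' : ∀ c ∈ C, ∀ a ∈ A,
      (c ≤ a → ∃ b ∈ B, c ≤ b ∧ b ≤ a) ∧ (a ≤ c → ∃ b ∈ B, a ≤ b ∧ b ≤ c) :=
    fun c hc a ha => ⟨(hfree a ha c hc).2, (hfree a ha c hc).1⟩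
  have hmemw : ∀ w : W, w ∈ A ∪ C := fun w => by rw [hunion]; trivial
  have supAll : ∀ x y : W, ∃ u, x ≤ u ∧ y ≤ u ∧ ∀ w, x ≤ w → y ≤ w → u ≤ w := by
    intro x y
    rcases hmemw x with hx | hx <;> rcases hmemw y with hy | hy
    · exact supSame hunion hAlat hClat hfree hBA hBC hx hy
    · exact supCross G hunion hB htop hAlat hClat hfree hBA hBC hx hy
    · exact supCross G hunion' hB' htop hClat hAlat hfree' hBC hBA hx hy
    · exact supSame hunion' hClat hAlat hfree' hBC hBA hx hy
  have infAll : ∀ x y : W, ∃ u, u ≤ x ∧ u ≤ y ∧ ∀ w, w ≤ x → w ≤ y → w ≤ u := by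
    intro x y
    rcases hmemw x with hx | hx <;> rcases hmemw y with hy | hy
    · exact infSame hunion hAlat hClat hfree hBA hBC hx hy
    · exact infCross G hunion hB hbot hAlat hClat hfree hBA hBC hx hy
    · exact infCross G hunion' hB' hbot hClat hAlat hfree' hBC hBA hx hy
    · exact infSame hunion' hClat hAlat hfree' hBC hBA hx hy
  refine ⟨?_, ?_, ?_, ?_⟩
  · intro a _ b _
    constructor
    · obtain ⟨u, h1, h2, h3⟩ := supAll a b
      exact ⟨u, trivial, h1, h2, fun w _ => h3 w⟩
    · obtain ⟨u, h1, h2, h3⟩ := infAll a b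
      exact ⟨u, trivial, h1, h2, fun w _ => h3 w⟩
  · exact ⟨Set.subset_univ A, (hB ▸ hbot).1, (hB ▸ htop).1,
      fun x n hz h0 hn => closedAux hunion hB hfree hBC x n hz h0 hn⟩
  · exact ⟨Set.subset_univ C, (hB ▸ hbot).2, (hB ▸ htop).2,
      fun x n hz h0 hn => closedAux hunion' hB' hfree' hBA x n hz h0 hn⟩
  · intro hSCA hSCC x n hcyc
    by_cases hA : ∀ t, x t ∈ A
    · apply hSCA x n
      obtain ⟨hn, hper, hmem, hcond⟩ := hcyc
      refine ⟨hn, hper, hA, ?_⟩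
      intro t
      rcases hcond t with ⟨a, b, c⟩ | ⟨a, b, c⟩
      · exact Or.inl ⟨a, b, fun y hy h1 h2 => c y trivial h1 h2⟩
      · exact Or.inr ⟨a, b, fun y hy h1 h2 => c y trivial h1 h2⟩
    by_cases hC : ∀ t, x t ∈ C
    · apply hSCC x n
      obtain ⟨hn, hper, hmem, hcond⟩ := hcyc
      refine ⟨hn, hper, hC, ?_⟩
      intro t
      rcases hcond t with ⟨a, b, c⟩ | ⟨a, b, c⟩
      · exact Or.inl ⟨a, b, fun y hy h1 h2 => c y trivial h1 h2⟩
      · exact Or.inr ⟨a, b, fun y hy h1 h2 => c y trivial h1 h2⟩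
    push_neg at hA hC
    obtain ⟨k₀, hk₀⟩ := hA
    obtain ⟨l₀, hl₀⟩ := hC
    have hl₀A : x l₀ ∈ A := (hmemw (x l₀)).resolve_right hl₀
    exact cycleAux hunion hB hfree hBC x n hcyc k₀ l₀ hk₀ hl₀A
end

section
/- Let a_0,b_0,…,b_{n−1},a_n be a zigzag in a lattice (beginning and ending with sinks) and let x be one of its terms. If a_0 ≤ r, a_n ≤ s, x ≰ r and x ≰ s, then x lies on a zigzag between r and s, i.e. there is a zigzag with endpoints r and s containing x among its terms. -/
variable {V : Type*} [Lattice V]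

/-- (Lemma 4.6) Let `a₀, b₀, …, b_{n-1}, aₙ` be a zigzag of length `2 * n` beginning
and ending with sinks (so `p 0 < p 1` when `n > 0`), and let `x = p j` be one of its
terms.  If `a₀ ≤ r`, `aₙ ≤ s`, `x ≰ r` and `x ≰ s`, then `x` lies on a zigzag between
`r` and `s`. -/
theorem mem_zigzag_between (p : ℕ → V) (n : ℕ)
    (hz : IsZigzag p (2 * n)) (hstart : 0 < n → p 0 < p 1)
    (j : ℕ) (hj : j ≤ 2 * n) (r s : V)
    (hr : p 0 ≤ r) (hs : p (2 * n) ≤ s)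
    (hxr : ¬p j ≤ r) (hxs : ¬p j ≤ s) :
    ∃ (q : ℕ → V) (m : ℕ), IsZigzag q m ∧ q 0 = r ∧ q m = s ∧
      ∃ k ≤ m, q k = p j := by
  classical
  obtain ⟨hz1, hz2⟩ := hz
  -- the largest index `l ≤ j` with `p l ≤ r`
  set l := Nat.findGreatest (fun i => p i ≤ r) j with hldef
  have hl_le : l ≤ j := Nat.findGreatest_le j
  have hlP : p l ≤ r := Nat.findGreatest_spec (P := fun i => p i ≤ r) (Nat.zero_le j) hr
  have hmaxr : ∀ i, l < i → i ≤ j → ¬ p i ≤ r := fun i h1 h2 =>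
    Nat.findGreatest_is_greatest h1 h2
  have hlj : l < j := lt_of_le_of_ne hl_le fun h => hxr (h ▸ hlP)
  -- the smallest index `m ≥ j` with `p m ≤ s`
  have hex : ∃ t, p (j + t) ≤ s := ⟨2 * n - j, by
    have e : j + (2 * n - j) = 2 * n := by omega
    rw [e]; exact hs⟩
  set m := j + Nat.find hex with hmdef
  have hmP : p m ≤ s := Nat.find_spec hex
  have hm2n : m ≤ 2 * n := by
    have h := Nat.find_min' hex (m := 2 * n - j) (show p (j + (2 * n - j)) ≤ s by
      have e : j + (2 * n - j) = 2 * n := by omega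
      rw [e]; exact hs)
    omega
  have hmins : ∀ i, j ≤ i → i < m → ¬ p i ≤ s := by
    intro i h1 h2
    have h3 := Nat.find_min hex (show i - j < Nat.find hex by omega)
    have e : j + (i - j) = i := by omega
    rwa [e] at h3
  have hjm : j < m := by
    rcases Nat.lt_or_ge j m with h | h
    · exact h
    · have e : m = j := by omega
      exact absurd (by rwa [e] at hmP) hxs
  have hl2 : l + 2 ≤ 2 * n := by
    by_contra h
    have hj2 : j = 2 * n := by omega
    exact hxs (by rw [hj2]; exact hs)
  have hbr : ¬ p (l + 1) ≤ r := hmaxr (l + 1) (Nat.lt_succ_self l) (by omega)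
  have hpk : p l < p (l + 1) ∧ p (l + 2) < p (l + 1) ∧ p (l + 1) = p l ⊔ p (l + 2) := by
    rcases hz2 l hl2 with h | h
    · exact absurd (h.1.le.trans hlP) hbr
    · exact h
  have hm2 : 2 ≤ m := by omega
  have hb's : ¬ p (m - 1) ≤ s := hmins (m - 1) (by omega) (by omega)
  have hpk' : p (m - 2) < p (m - 1) ∧ p m < p (m - 1) ∧ p (m - 1) = p (m - 2) ⊔ p m := by
    have e1 : m - 2 + 1 = m - 1 := by omega
    have e2 : m - 2 + 2 = m := by omega
    rcases hz2 (m - 2) (by omega) with h | h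
    · rw [e1, e2] at h
      exact absurd (h.2.1.le.trans hmP) hb's
    · rw [e1, e2] at h
      exact h
  -- the new zigzag
  set mid := m - l - 2 with hmiddef
  have hmeq : m = l + 2 + mid := by omega
  set c : ℕ := if r ≤ p (l + 1) then 1 else 2 with hcdef
  set c' : ℕ := if s ≤ p (m - 1) then 1 else 2 with hc'def
  have hcc : (c = 1 ∧ r ≤ p (l + 1)) ∨ (c = 2 ∧ ¬ r ≤ p (l + 1)) := by
    by_cases h : r ≤ p (l + 1)
    · exact Or.inl ⟨by rw [hcdef, if_pos h], h⟩
    · exact Or.inr ⟨by rw [hcdef, if_neg h], h⟩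
  have hcc' : (c' = 1 ∧ s ≤ p (m - 1)) ∨ (c' = 2 ∧ ¬ s ≤ p (m - 1)) := by
    by_cases h : s ≤ p (m - 1)
    · exact Or.inl ⟨by rw [hc'def, if_pos h], h⟩
    · exact Or.inr ⟨by rw [hc'def, if_neg h], h⟩
  have hc1 : 1 ≤ c := by rcases hcc with ⟨h, _⟩ | ⟨h, _⟩ <;> omega
  have hc2 : c ≤ 2 := by rcases hcc with ⟨h, _⟩ | ⟨h, _⟩ <;> omega
  have hc'1 : 1 ≤ c' := by rcases hcc' with ⟨h, _⟩ | ⟨h, _⟩ <;> omega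
  have hc'2 : c' ≤ 2 := by rcases hcc' with ⟨h, _⟩ | ⟨h, _⟩ <;> omega
  set M := c + mid + c' with hMdef
  set q : ℕ → V := fun i =>
    if i = 0 then r
    else if i < c then r ⊓ p (l + 1)
    else if i ≤ c + mid then p (l + 1 + (i - c))
    else if i < M then s ⊓ p (m - 1)
    else s with hqdef
  -- evaluation lemmas
  have hqval : ∀ i : ℕ, q i =
      if i = 0 then r
      else if i < c then r ⊓ p (l + 1)
      else if i ≤ c + mid then p (l + 1 + (i - c))
      else if i < M then s ⊓ p (m - 1)
      else s := fun i => rfl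
  have hq0 : q 0 = r := by rw [hqval, if_pos rfl]
  have hqmid : ∀ t, t ≤ mid → q (c + t) = p (l + 1 + t) := by
    intro t ht
    rw [hqval]
    rw [if_neg (by omega), if_neg (by omega), if_pos (by omega)]
    congr 1
    omega
  have hqc : q c = p (l + 1) := by
    have h := hqmid 0 (Nat.zero_le _)
    simpa using h
  have hqrb : q (c - 1) = r ⊓ p (l + 1) := by
    rcases hcc with ⟨h1, h2⟩ | ⟨h1, h2⟩
    · rw [h1]
      rw [hqval]
      rw [if_pos (by omega)]
      exact (inf_eq_left.mpr h2).symm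
    · rw [h1]
      rw [hqval]
      rw [if_neg (by omega), if_pos (by omega)]
  have hqsb : q (c + mid + 1) = s ⊓ p (m - 1) := by
    rcases hcc' with ⟨h1, h2⟩ | ⟨h1, h2⟩
    · simp only [hqdef]
      rw [if_neg (by omega), if_neg (by omega), if_neg (by omega), if_neg (by omega)]
      exact (inf_eq_left.mpr h2).symm
    · simp only [hqdef]
      rw [if_neg (by omega), if_neg (by omega), if_neg (by omega), if_pos (by omega)]
  have hqM : q M = s := by
    rw [hqval]
    rw [if_neg (by omega), if_neg (by omega), if_neg (by omega), if_neg (by omega)]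
  have hqx : q (c + (j - (l + 1))) = p j := by
    rw [hqmid _ (by omega)]
    congr 1
    omega
  refine ⟨q, M, ⟨?_, ?_⟩, hq0, hqM, c + (j - (l + 1)), by omega, hqx⟩
  · -- strict comparability of consecutive terms
    intro i hi
    by_cases h1 : i + 1 < c
    · have hce : c = 2 := by omega
      have hcr : ¬ r ≤ p (l + 1) := by
        rcases hcc with ⟨h, _⟩ | ⟨_, h⟩
        · omega
        · exact h
      right
      have v0 : q i = r := by rw [show i = 0 by omega]; exact hq0
      have v1 : q (i + 1) = r ⊓ p (l + 1) := by
        rw [show i + 1 = c - 1 by omega]; exact hqrb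
      rw [v0, v1]
      exact inf_lt_left.mpr hcr
    · by_cases h2 : i + 1 = c
      · left
        have v0 : q i = r ⊓ p (l + 1) := by rw [show i = c - 1 by omega]; exact hqrb
        have v1 : q (i + 1) = p (l + 1) := by rw [h2]; exact hqc
        rw [v0, v1]
        exact inf_lt_right.mpr hbr
      · by_cases h3 : i + 1 ≤ c + mid
        · have v0 : q i = p (l + 1 + (i - c)) := by
            have h := hqmid (i - c) (by omega)
            rwa [show c + (i - c) = i by omega] at h
          have v1 : q (i + 1) = p (l + 1 + (i - c) + 1) := by
            have h := hqmid (i - c + 1) (by omega)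
            rwa [show c + (i - c + 1) = i + 1 by omega,
              show l + 1 + (i - c + 1) = l + 1 + (i - c) + 1 by omega] at h
          rw [v0, v1]
          exact hz1 (l + 1 + (i - c)) (by omega)
        · by_cases h4 : i = c + mid
          · right
            have v0 : q i = p (m - 1) := by
              have h := hqmid mid le_rfl
              rw [show c + mid = i by omega] at h
              rwa [show l + 1 + mid = m - 1 by omega] at h
            have v1 : q (i + 1) = s ⊓ p (m - 1) := by
              rw [show i + 1 = c + mid + 1 by omega]; exact hqsb
            rw [v0, v1]
            exact inf_lt_right.mpr hb's
          · have hcp : c' = 2 := by omega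
            have hsr : ¬ s ≤ p (m - 1) := by
              rcases hcc' with ⟨h, _⟩ | ⟨_, h⟩
              · omega
              · exact h
            left
            have v0 : q i = s ⊓ p (m - 1) := by
              rw [show i = c + mid + 1 by omega]; exact hqsb
            have v1 : q (i + 1) = s := by rw [show i + 1 = M by omega]; exact hqM
            rw [v0, v1]
            exact inf_lt_left.mpr hsr
  · -- peak/sink conditions
    intro i hi2
    by_cases h1 : i + 1 < c
    · left
      have hce : c = 2 := by omega
      have hcr : ¬ r ≤ p (l + 1) := by
        rcases hcc with ⟨h, _⟩ | ⟨_, h⟩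
        · omega
        · exact h
      have v0 : q i = r := by rw [show i = 0 by omega]; exact hq0
      have v1 : q (i + 1) = r ⊓ p (l + 1) := by
        rw [show i + 1 = c - 1 by omega]; exact hqrb
      have v2 : q (i + 2) = p (l + 1) := by rw [show i + 2 = c by omega]; exact hqc
      refine ⟨?_, ?_, ?_⟩
      · rw [v0, v1]; exact inf_lt_left.mpr hcr
      · rw [v1, v2]; exact inf_lt_right.mpr hbr
      · rw [v0, v1, v2]
    · by_cases h2 : i + 1 = c
      · right
        have v0 : q i = r ⊓ p (l + 1) := by rw [show i = c - 1 by omega]; exact hqrb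
        have v1 : q (i + 1) = p (l + 1) := by rw [h2]; exact hqc
        have hlrb : p l ≤ r ⊓ p (l + 1) := le_inf hlP hpk.1.le
        by_cases hm0 : mid = 0
        · have hbb : p (m - 1) = p (l + 1) := by rw [show m - 1 = l + 1 by omega]
          have hmm : p m = p (l + 2) := by rw [show m = l + 2 by omega]
          have v2 : q (i + 2) = s ⊓ p (m - 1) := by
            rw [show i + 2 = c + mid + 1 by omega]; exact hqsb
          have hpm : p (l + 2) ≤ s ⊓ p (m - 1) := by
            rw [← hmm]; exact le_inf hmP hpk'.2.1.le
          refine ⟨?_, ?_, ?_⟩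
          · rw [v0, v1]; exact inf_lt_right.mpr hbr
          · rw [v1, v2, hbb]
            exact inf_lt_right.mpr (hbb ▸ hb's)
          · rw [v0, v1, v2]
            apply le_antisymm
            · exact hpk.2.2.le.trans
                (sup_le (hlrb.trans le_sup_left) (hpm.trans le_sup_right))
            · exact sup_le inf_le_right (inf_le_right.trans hbb.le)
        · have v2 : q (i + 2) = p (l + 2) := by
            have h := hqmid 1 (by omega)
            rw [show i + 2 = c + 1 by omega]
            rwa [show l + 1 + 1 = l + 2 by omega] at h
          refine ⟨?_, ?_, ?_⟩
          · rw [v0, v1]; exact inf_lt_right.mpr hbr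
          · rw [v1, v2]; exact hpk.2.1
          · rw [v0, v1, v2]
            apply le_antisymm
            · exact hpk.2.2.le.trans (sup_le (hlrb.trans le_sup_left) le_sup_right)
            · exact sup_le inf_le_right hpk.2.1.le
      · by_cases h3 : i + 1 < c + mid
        · have v0 : q i = p (l + 1 + (i - c)) := by
            have h := hqmid (i - c) (by omega)
            rwa [show c + (i - c) = i by omega] at h
          have v1 : q (i + 1) = p (l + 1 + (i - c) + 1) := by
            have h := hqmid (i - c + 1) (by omega)
            rwa [show c + (i - c + 1) = i + 1 by omega,
              show l + 1 + (i - c + 1) = l + 1 + (i - c) + 1 by omega] at h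
          have v2 : q (i + 2) = p (l + 1 + (i - c) + 2) := by
            have h := hqmid (i - c + 2) (by omega)
            rwa [show c + (i - c + 2) = i + 2 by omega,
              show l + 1 + (i - c + 2) = l + 1 + (i - c) + 2 by omega] at h
          rw [v0, v1, v2]
          exact hz2 (l + 1 + (i - c)) (by omega)
        · by_cases h4 : i + 1 = c + mid
          · have hm1 : 1 ≤ mid := by omega
            right
            have v0 : q i = p (m - 2) := by
              have h := hqmid (mid - 1) (by omega)
              rw [show c + (mid - 1) = i by omega] at h
              rwa [show l + 1 + (mid - 1) = m - 2 by omega] at h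
            have v1 : q (i + 1) = p (m - 1) := by
              have h := hqmid mid le_rfl
              rw [← h4] at h
              rwa [show l + 1 + mid = m - 1 by omega] at h
            have v2 : q (i + 2) = s ⊓ p (m - 1) := by
              rw [show i + 2 = c + mid + 1 by omega]; exact hqsb
            refine ⟨?_, ?_, ?_⟩
            · rw [v0, v1]; exact hpk'.1
            · rw [v1, v2]; exact inf_lt_right.mpr hb's
            · rw [v0, v1, v2]
              apply le_antisymm
              · exact hpk'.2.2.le.trans
                  (sup_le le_sup_left ((le_inf hmP hpk'.2.1.le).trans le_sup_right))
              · exact sup_le hpk'.1.le inf_le_right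
          · have hcp : c' = 2 := by omega
            have hsr : ¬ s ≤ p (m - 1) := by
              rcases hcc' with ⟨h, _⟩ | ⟨_, h⟩
              · omega
              · exact h
            left
            have v0 : q i = p (m - 1) := by
              have h := hqmid mid le_rfl
              rw [show c + mid = i by omega] at h
              rwa [show l + 1 + mid = m - 1 by omega] at h
            have v1 : q (i + 1) = s ⊓ p (m - 1) := by
              rw [show i + 1 = c + mid + 1 by omega]; exact hqsb
            have v2 : q (i + 2) = s := by rw [show i + 2 = M by omega]; exact hqM
            refine ⟨?_, ?_, ?_⟩
            · rw [v0, v1]; exact inf_lt_right.mpr hb's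
            · rw [v1, v2]; exact inf_lt_left.mpr hsr
            · rw [v0, v1, v2]; exact inf_comm s (p (m - 1))
end
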